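/- arXiv:2507.04747 — 5 statements merged into one kernel-verified Lean document; each statement's English description precedes it below -/
import Mathlib

section
/- Let f : [0,1]³ → ℝ be continuous and satisfy strict rectangle inequalities: for all u < u', v < v', w in [0,1], f(u',v',w) - f(u',v,w) - f(u,v',w) + f(u,v,w) > 0, and analogously for the pairs (x,z) and (y,z). Then for any two points x₁ = (ξ₁,γ₁,ζ₁) and x₂ = (ξ₂,γ₂,ζ₂) in [0,1]³, f(ξ₁,γ₁,ζ₁) + f(ξ₂,γ₂,ζ₂) ≤ f(min(ξ₁,ξ₂), min(γ₁,γ₂), min(ζ₁,ζ₂)) + f(max(ξ₁,ξ₂), max(γ₁,γ₂), max(ζ₁,ζ₂)), with equality if and only if the two points are well-ordered (coordinatewise comparable). -/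
open Set

theorem stmt_aux (f : ℝ → ℝ → ℝ → ℝ)
    (hxy : ∀ u u' v v' w, u ∈ Icc (0:ℝ) 1 → u' ∈ Icc (0:ℝ) 1 → v ∈ Icc (0:ℝ) 1 →
      v' ∈ Icc (0:ℝ) 1 → w ∈ Icc (0:ℝ) 1 → u < u' → v < v' →
      0 < f u' v' w - f u' v w - f u v' w + f u v w)
    (hxz : ∀ u u' w w' v, u ∈ Icc (0:ℝ) 1 → u' ∈ Icc (0:ℝ) 1 → w ∈ Icc (0:ℝ) 1 →
      w' ∈ Icc (0:ℝ) 1 → v ∈ Icc (0:ℝ) 1 → u < u' → w < w' →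
      0 < f u' v w' - f u' v w - f u v w' + f u v w)
    (hyz : ∀ v v' w w' u, v ∈ Icc (0:ℝ) 1 → v' ∈ Icc (0:ℝ) 1 → w ∈ Icc (0:ℝ) 1 →
      w' ∈ Icc (0:ℝ) 1 → u ∈ Icc (0:ℝ) 1 → v < v' → w < w' →
      0 < f u v' w' - f u v' w - f u v w' + f u v w)
    (ξ₁ γ₁ ζ₁ ξ₂ γ₂ ζ₂ : ℝ)
    (hξ₁ : ξ₁ ∈ Icc (0:ℝ) 1) (hγ₁ : γ₁ ∈ Icc (0:ℝ) 1) (hζ₁ : ζ₁ ∈ Icc (0:ℝ) 1)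
    (hξ₂ : ξ₂ ∈ Icc (0:ℝ) 1) (hγ₂ : γ₂ ∈ Icc (0:ℝ) 1) (hζ₂ : ζ₂ ∈ Icc (0:ℝ) 1)
    (hle : ξ₁ ≤ ξ₂) :
    f ξ₁ γ₁ ζ₁ + f ξ₂ γ₂ ζ₂ ≤
      f (min ξ₁ ξ₂) (min γ₁ γ₂) (min ζ₁ ζ₂) + f (max ξ₁ ξ₂) (max γ₁ γ₂) (max ζ₁ ζ₂) ∧
    (f ξ₁ γ₁ ζ₁ + f ξ₂ γ₂ ζ₂ =
      f (min ξ₁ ξ₂) (min γ₁ γ₂) (min ζ₁ ζ₂) + f (max ξ₁ ξ₂) (max γ₁ γ₂) (max ζ₁ ζ₂) ↔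
      ((ξ₂ ≤ ξ₁ ∧ γ₂ ≤ γ₁ ∧ ζ₂ ≤ ζ₁) ∨ (ξ₁ ≤ ξ₂ ∧ γ₁ ≤ γ₂ ∧ ζ₁ ≤ ζ₂))) := by
  rcases le_total γ₁ γ₂ with hγ | hγ <;> rcases le_total ζ₁ ζ₂ with hζ | hζ
  · -- γ₁ ≤ γ₂, ζ₁ ≤ ζ₂ : points comparable
    rw [min_eq_left hle, max_eq_right hle, min_eq_left hγ, max_eq_right hγ,
      min_eq_left hζ, max_eq_right hζ]
    exact ⟨le_refl _, ⟨fun _ => Or.inr ⟨hle, hγ, hζ⟩, fun _ => rfl⟩⟩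
  · -- γ₁ ≤ γ₂, ζ₂ ≤ ζ₁
    rw [min_eq_left hle, max_eq_right hle, min_eq_left hγ, max_eq_right hγ,
      min_eq_right hζ, max_eq_left hζ]
    -- A from hxz (u=ξ₁,u'=ξ₂,w=ζ₂,w'=ζ₁,v=γ₂), B from hyz (v=γ₁,v'=γ₂,w=ζ₂,w'=ζ₁,u=ξ₁)
    have hA0 : 0 ≤ f ξ₂ γ₂ ζ₁ - f ξ₂ γ₂ ζ₂ - f ξ₁ γ₂ ζ₁ + f ξ₁ γ₂ ζ₂ := by
      rcases hle.lt_or_eq with h | h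
      · rcases hζ.lt_or_eq with h' | h'
        · linarith [hxz ξ₁ ξ₂ ζ₂ ζ₁ γ₂ hξ₁ hξ₂ hζ₂ hζ₁ hγ₂ h h']
        · rw [h']; linarith
      · rw [h]; linarith
    have hB0 : 0 ≤ f ξ₁ γ₂ ζ₁ - f ξ₁ γ₂ ζ₂ - f ξ₁ γ₁ ζ₁ + f ξ₁ γ₁ ζ₂ := by
      rcases hγ.lt_or_eq with h | h
      · rcases hζ.lt_or_eq with h' | h'
        · linarith [hyz γ₁ γ₂ ζ₂ ζ₁ ξ₁ hγ₁ hγ₂ hζ₂ hζ₁ hξ₁ h h']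
        · rw [h']; linarith
      · rw [h]; linarith
    constructor
    · linarith
    constructor
    · intro heq
      rcases hζ.lt_or_eq with h | h
      · have hξe : ξ₁ = ξ₂ := by
          rcases hle.lt_or_eq with h' | h'
          · exfalso; have := hxz ξ₁ ξ₂ ζ₂ ζ₁ γ₂ hξ₁ hξ₂ hζ₂ hζ₁ hγ₂ h' h; linarith
          · exact h'
        have hγe : γ₁ = γ₂ := by
          rcases hγ.lt_or_eq with h' | h'
          · exfalso; have := hyz γ₁ γ₂ ζ₂ ζ₁ ξ₁ hγ₁ hγ₂ hζ₂ hζ₁ hξ₁ h' h; linarith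
          · exact h'
        exact Or.inl ⟨hξe.ge, hγe.ge, hζ⟩
      · exact Or.inr ⟨hle, hγ, h.ge⟩
    · rintro (⟨h1, h2, h3⟩ | ⟨h1, h2, h3⟩)
      · have e1 : ξ₁ = ξ₂ := le_antisymm hle h1
        have e2 : γ₁ = γ₂ := le_antisymm hγ h2
        rw [e1, e2]; try ring
      · have e3 : ζ₁ = ζ₂ := le_antisymm h3 hζ
        rw [e3]; try ring
  · -- γ₂ ≤ γ₁, ζ₁ ≤ ζ₂
    rw [min_eq_left hle, max_eq_right hle, min_eq_right hγ, max_eq_left hγ,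
      min_eq_left hζ, max_eq_right hζ]
    -- A from hxy (u=ξ₁,u'=ξ₂,v=γ₂,v'=γ₁,w=ζ₂), B from hyz (v=γ₂,v'=γ₁,w=ζ₁,w'=ζ₂,u=ξ₁)
    have hA0 : 0 ≤ f ξ₂ γ₁ ζ₂ - f ξ₂ γ₂ ζ₂ - f ξ₁ γ₁ ζ₂ + f ξ₁ γ₂ ζ₂ := by
      rcases hle.lt_or_eq with h | h
      · rcases hγ.lt_or_eq with h' | h'
        · linarith [hxy ξ₁ ξ₂ γ₂ γ₁ ζ₂ hξ₁ hξ₂ hγ₂ hγ₁ hζ₂ h h']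
        · rw [h']; linarith
      · rw [h]; linarith
    have hB0 : 0 ≤ f ξ₁ γ₁ ζ₂ - f ξ₁ γ₁ ζ₁ - f ξ₁ γ₂ ζ₂ + f ξ₁ γ₂ ζ₁ := by
      rcases hγ.lt_or_eq with h | h
      · rcases hζ.lt_or_eq with h' | h'
        · linarith [hyz γ₂ γ₁ ζ₁ ζ₂ ξ₁ hγ₂ hγ₁ hζ₁ hζ₂ hξ₁ h h']
        · rw [h']; linarith
      · rw [h]; linarith
    constructor
    · linarith
    constructor
    · intro heq
      rcases hγ.lt_or_eq with h | h
      · have hξe : ξ₁ = ξ₂ := by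
          rcases hle.lt_or_eq with h' | h'
          · exfalso; have := hxy ξ₁ ξ₂ γ₂ γ₁ ζ₂ hξ₁ hξ₂ hγ₂ hγ₁ hζ₂ h' h; linarith
          · exact h'
        have hζe : ζ₁ = ζ₂ := by
          rcases hζ.lt_or_eq with h' | h'
          · exfalso; have := hyz γ₂ γ₁ ζ₁ ζ₂ ξ₁ hγ₂ hγ₁ hζ₁ hζ₂ hξ₁ h h'; linarith
          · exact h'
        exact Or.inl ⟨hξe.ge, hγ, hζe.ge⟩
      · exact Or.inr ⟨hle, h.ge, hζ⟩
    · rintro (⟨h1, h2, h3⟩ | ⟨h1, h2, h3⟩)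
      · have e1 : ξ₁ = ξ₂ := le_antisymm hle h1
        have e3 : ζ₁ = ζ₂ := le_antisymm hζ h3
        rw [e1, e3]; try ring
      · have e2 : γ₁ = γ₂ := le_antisymm h2 hγ
        rw [e2]; try ring
  · -- γ₂ ≤ γ₁, ζ₂ ≤ ζ₁
    rw [min_eq_left hle, max_eq_right hle, min_eq_right hγ, max_eq_left hγ,
      min_eq_right hζ, max_eq_left hζ]
    -- A from hxy (u=ξ₁,u'=ξ₂,v=γ₂,v'=γ₁,w=ζ₁), B from hxz (u=ξ₁,u'=ξ₂,w=ζ₂,w'=ζ₁,v=γ₂)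
    have hA0 : 0 ≤ f ξ₂ γ₁ ζ₁ - f ξ₂ γ₂ ζ₁ - f ξ₁ γ₁ ζ₁ + f ξ₁ γ₂ ζ₁ := by
      rcases hle.lt_or_eq with h | h
      · rcases hγ.lt_or_eq with h' | h'
        · linarith [hxy ξ₁ ξ₂ γ₂ γ₁ ζ₁ hξ₁ hξ₂ hγ₂ hγ₁ hζ₁ h h']
        · rw [h']; linarith
      · rw [h]; linarith
    have hB0 : 0 ≤ f ξ₂ γ₂ ζ₁ - f ξ₂ γ₂ ζ₂ - f ξ₁ γ₂ ζ₁ + f ξ₁ γ₂ ζ₂ := by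
      rcases hle.lt_or_eq with h | h
      · rcases hζ.lt_or_eq with h' | h'
        · linarith [hxz ξ₁ ξ₂ ζ₂ ζ₁ γ₂ hξ₁ hξ₂ hζ₂ hζ₁ hγ₂ h h']
        · rw [h']; linarith
      · rw [h]; linarith
    constructor
    · linarith
    constructor
    · intro heq
      rcases hle.lt_or_eq with h | h
      · have hγe : γ₂ = γ₁ := by
          rcases hγ.lt_or_eq with h' | h'
          · exfalso; have := hxy ξ₁ ξ₂ γ₂ γ₁ ζ₁ hξ₁ hξ₂ hγ₂ hγ₁ hζ₁ h h'; linarith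
          · exact h'
        have hζe : ζ₂ = ζ₁ := by
          rcases hζ.lt_or_eq with h' | h'
          · exfalso; have := hxz ξ₁ ξ₂ ζ₂ ζ₁ γ₂ hξ₁ hξ₂ hζ₂ hζ₁ hγ₂ h h'; linarith
          · exact h'
        exact Or.inr ⟨hle, hγe.ge, hζe.ge⟩
      · exact Or.inl ⟨h.ge, hγ, hζ⟩
    · rintro (⟨h1, h2, h3⟩ | ⟨h1, h2, h3⟩)
      · have e1 : ξ₁ = ξ₂ := le_antisymm hle h1
        rw [e1]; try ring
      · have e2 : γ₁ = γ₂ := le_antisymm h2 hγ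
        have e3 : ζ₁ = ζ₂ := le_antisymm h3 hζ
        rw [e2, e3]; try ring

theorem stmt_0 (f : ℝ → ℝ → ℝ → ℝ)
    (hcont : ContinuousOn (fun p : ℝ × ℝ × ℝ => f p.1 p.2.1 p.2.2)
      (Icc (0:ℝ) 1 ×ˢ Icc (0:ℝ) 1 ×ˢ Icc (0:ℝ) 1))
    (hxy : ∀ u u' v v' w, u ∈ Icc (0:ℝ) 1 → u' ∈ Icc (0:ℝ) 1 → v ∈ Icc (0:ℝ) 1 →
      v' ∈ Icc (0:ℝ) 1 → w ∈ Icc (0:ℝ) 1 → u < u' → v < v' →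
      0 < f u' v' w - f u' v w - f u v' w + f u v w)
    (hxz : ∀ u u' w w' v, u ∈ Icc (0:ℝ) 1 → u' ∈ Icc (0:ℝ) 1 → w ∈ Icc (0:ℝ) 1 →
      w' ∈ Icc (0:ℝ) 1 → v ∈ Icc (0:ℝ) 1 → u < u' → w < w' →
      0 < f u' v w' - f u' v w - f u v w' + f u v w)
    (hyz : ∀ v v' w w' u, v ∈ Icc (0:ℝ) 1 → v' ∈ Icc (0:ℝ) 1 → w ∈ Icc (0:ℝ) 1 →
      w' ∈ Icc (0:ℝ) 1 → u ∈ Icc (0:ℝ) 1 → v < v' → w < w' →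
      0 < f u v' w' - f u v' w - f u v w' + f u v w)
    (ξ₁ γ₁ ζ₁ ξ₂ γ₂ ζ₂ : ℝ)
    (hξ₁ : ξ₁ ∈ Icc (0:ℝ) 1) (hγ₁ : γ₁ ∈ Icc (0:ℝ) 1) (hζ₁ : ζ₁ ∈ Icc (0:ℝ) 1)
    (hξ₂ : ξ₂ ∈ Icc (0:ℝ) 1) (hγ₂ : γ₂ ∈ Icc (0:ℝ) 1) (hζ₂ : ζ₂ ∈ Icc (0:ℝ) 1) :
    f ξ₁ γ₁ ζ₁ + f ξ₂ γ₂ ζ₂ ≤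
      f (min ξ₁ ξ₂) (min γ₁ γ₂) (min ζ₁ ζ₂) + f (max ξ₁ ξ₂) (max γ₁ γ₂) (max ζ₁ ζ₂) ∧
    (f ξ₁ γ₁ ζ₁ + f ξ₂ γ₂ ζ₂ =
      f (min ξ₁ ξ₂) (min γ₁ γ₂) (min ζ₁ ζ₂) + f (max ξ₁ ξ₂) (max γ₁ γ₂) (max ζ₁ ζ₂) ↔
      ((ξ₂ ≤ ξ₁ ∧ γ₂ ≤ γ₁ ∧ ζ₂ ≤ ζ₁) ∨ (ξ₁ ≤ ξ₂ ∧ γ₁ ≤ γ₂ ∧ ζ₁ ≤ ζ₂))) := by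
  rcases le_total ξ₁ ξ₂ with h | h
  · exact stmt_aux f hxy hxz hyz ξ₁ γ₁ ζ₁ ξ₂ γ₂ ζ₂ hξ₁ hγ₁ hζ₁ hξ₂ hγ₂ hζ₂ h
  · obtain ⟨h1, h2⟩ := stmt_aux f hxy hxz hyz ξ₂ γ₂ ζ₂ ξ₁ γ₁ ζ₁ hξ₂ hγ₂ hζ₂ hξ₁ hγ₁ hζ₁ h
    rw [min_comm ξ₂ ξ₁, min_comm γ₂ γ₁, min_comm ζ₂ ζ₁, max_comm ξ₂ ξ₁,
      max_comm γ₂ γ₁, max_comm ζ₂ ζ₁, add_comm (f ξ₂ γ₂ ζ₂)] at h1 h2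
    exact ⟨h1, h2.trans or_comm⟩
end

section
/- Let p¹ be a finite set of points in a product space X with real weights λ¹ : p¹ → ℝ \ {0}, and let p² be a finite set of m points with weights λ_ε taking only the values ε and -ε for some ε > 0. Let k be the number of points in p¹ ∩ p² at which λ¹ and λ_ε have opposite signs. If k ≥ m/2 and 0 < ε ≤ min{|λ¹(x)| : x ∈ p¹ ∩ p², λ¹(x)λ_ε(x) < 0}, then the combined weight function λ (defined as λ¹ + λ_ε on the intersection, λ¹ on p¹ \ p², and λ_ε on p² \ p¹) satisfies Σ_{x ∈ p¹ ∪ p²} |λ(x)| ≤ Σ_{x ∈ p¹} |λ¹(x)|. -/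
open Finset

theorem stmt_3 {X : Type*} [DecidableEq X]
    (p₁ p₂ : Finset X) (lam₁ lamE : X → ℝ) (ε : ℝ) (hε : 0 < ε)
    (h₁ : ∀ x ∈ p₁, lam₁ x ≠ 0)
    (h₂ : ∀ x ∈ p₂, lamE x = ε ∨ lamE x = -ε)
    (hk : p₂.card ≤ 2 * ((p₁ ∩ p₂).filter (fun x => lam₁ x * lamE x < 0)).card)
    (hmin : ∀ x ∈ p₁ ∩ p₂, lam₁ x * lamE x < 0 → ε ≤ |lam₁ x|) :
    ∑ x ∈ p₁ ∪ p₂,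
        |(if x ∈ p₁ then lam₁ x else 0) + (if x ∈ p₂ then lamE x else 0)| ≤
      ∑ x ∈ p₁, |lam₁ x| := by
  classical
  set f : X → ℝ :=
    fun x => |(if x ∈ p₁ then lam₁ x else 0) + (if x ∈ p₂ then lamE x else 0)| with hf
  set I := p₁ ∩ p₂ with hI
  set S := I.filter (fun x => lam₁ x * lamE x < 0) with hS
  have hSI : S ⊆ I := filter_subset _ _
  have hIp2 : I ⊆ p₂ := inter_subset_right
  have hdiffeq : p₂ \ I = p₂ \ p₁ := by
    rw [hI]; ext x; simp [mem_sdiff]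
  have hd1 : Disjoint (p₁ \ p₂) p₂ := sdiff_disjoint
  have hsplit : ∑ x ∈ p₁ ∪ p₂, f x
      = ∑ x ∈ p₁ \ p₂, f x + (∑ x ∈ p₂ \ p₁, f x + ∑ x ∈ I, f x) := by
    rw [← sdiff_union_self_eq_union, sum_union hd1]
    congr 1
    rw [← sum_sdiff hIp2, hdiffeq]
  have hIsplit : ∑ x ∈ I, f x = ∑ x ∈ S, f x + ∑ x ∈ I \ S, f x := by
    rw [← sum_sdiff hSI]; ring
  -- pointwise values
  have hA : ∑ x ∈ p₁ \ p₂, f x = ∑ x ∈ p₁ \ p₂, |lam₁ x| := by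
    apply sum_congr rfl
    intro x hx
    rw [mem_sdiff] at hx
    simp [hf, hx.1, hx.2]
  have hB : ∑ x ∈ p₂ \ p₁, f x = (p₂ \ p₁).card * ε := by
    have h : ∑ x ∈ p₂ \ p₁, f x = ∑ _x ∈ p₂ \ p₁, ε := by
      apply sum_congr rfl
      intro x hx
      rw [mem_sdiff] at hx
      rcases h₂ x hx.1 with h | h <;>
        simp [hf, hx.1, hx.2, h, abs_of_pos hε, abs_of_neg (neg_neg_iff_pos.mpr hε)]
    rw [h, sum_const, nsmul_eq_mul]
  have hC : ∀ x ∈ S, f x = |lam₁ x| - ε := by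
    intro x hx
    rw [hS, mem_filter] at hx
    obtain ⟨hxI, hprod⟩ := hx
    have hx1 : x ∈ p₁ := mem_of_mem_inter_left hxI
    have hx2 : x ∈ p₂ := mem_of_mem_inter_right hxI
    have hm := hmin x hxI hprod
    rcases h₂ x hx2 with hE | hE
    · have hl : lam₁ x < 0 := by nlinarith
      rw [abs_of_neg hl] at hm
      simp only [hf, hx1, hx2, if_true, hE]
      rw [abs_of_nonpos (by linarith), abs_of_neg hl]; ring
    · have hl : 0 < lam₁ x := by nlinarith
      rw [abs_of_pos hl] at hm
      simp only [hf, hx1, hx2, if_true, hE]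
      rw [abs_of_nonneg (by linarith), abs_of_pos hl]; ring
  have hD : ∀ x ∈ I \ S, f x = |lam₁ x| + ε := by
    intro x hx
    rw [mem_sdiff, hS, mem_filter] at hx
    obtain ⟨hxI, hns⟩ := hx
    have hprod : ¬ lam₁ x * lamE x < 0 := fun h => hns ⟨hxI, h⟩
    have hx1 : x ∈ p₁ := mem_of_mem_inter_left hxI
    have hx2 : x ∈ p₂ := mem_of_mem_inter_right hxI
    have hne := h₁ x hx1
    push_neg at hprod
    rcases h₂ x hx2 with hE | hE
    · have hl : 0 < lam₁ x := by
        rcases hne.lt_or_gt with h | h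
        · exfalso; rw [hE] at hprod; nlinarith
        · exact h
      simp only [hf, hx1, hx2, if_true, hE]
      rw [abs_of_pos (by linarith), abs_of_pos hl]
    · have hl : lam₁ x < 0 := by
        rcases hne.lt_or_gt with h | h
        · exact h
        · exfalso; rw [hE] at hprod; nlinarith
      simp only [hf, hx1, hx2, if_true, hE]
      rw [abs_of_neg (by linarith), abs_of_neg hl]; ring
  have hCsum : ∑ x ∈ S, f x = ∑ x ∈ S, |lam₁ x| - S.card * ε := by
    rw [sum_congr rfl hC, sum_sub_distrib, sum_const, nsmul_eq_mul]
  have hDsum : ∑ x ∈ I \ S, f x = ∑ x ∈ I \ S, |lam₁ x| + (I \ S).card * ε := by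
    rw [sum_congr rfl hD, sum_add_distrib, sum_const, nsmul_eq_mul]
  -- right-hand side decomposition
  have hIp1 : I ⊆ p₁ := inter_subset_left
  have hdiffeq1 : p₁ \ I = p₁ \ p₂ := by
    rw [hI]; ext x; simp [mem_sdiff]
  have hRHS : ∑ x ∈ p₁, |lam₁ x|
      = ∑ x ∈ p₁ \ p₂, |lam₁ x| + (∑ x ∈ S, |lam₁ x| + ∑ x ∈ I \ S, |lam₁ x|) := by
    rw [← sum_sdiff hIp1, hdiffeq1]
    congr 1
    rw [← sum_sdiff hSI]; ring
  -- cardinality bookkeeping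
  have hcard1 : (p₂ \ p₁).card + I.card = p₂.card := by
    rw [← hdiffeq]
    exact card_sdiff_add_card_eq_card hIp2
  have hcard2 : (I \ S).card + S.card = I.card := card_sdiff_add_card_eq_card hSI
  have hn : (p₂ \ p₁).card + (I \ S).card ≤ S.card := by omega
  have hr : ((p₂ \ p₁).card : ℝ) * ε + (I \ S).card * ε ≤ S.card * ε := by
    have h : ((p₂ \ p₁).card : ℝ) + (I \ S).card ≤ S.card := by
      exact_mod_cast hn
    nlinarith
  rw [hsplit, hIsplit, hA, hB, hCsum, hDsum, hRHS]
  linarith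
end

section
/- Let (p,λ) be a projection cycle-vector in [0,1]³ that maximizes Σλ_i f(x_i) / Σ|λ_i| over all projection cycle-vectors with points in a finite grid S = S_x × S_y × S_z (with {0,1} ⊂ S_x ∩ S_y ∩ S_z), where f is continuous on [0,1]³ and satisfies the strict conditions Δ_xΔ_y f > 0, Δ_xΔ_z f > 0, Δ_yΔ_z f > 0. Then any two points x_k, x_j of p with positive weights λ_k > 0, λ_j > 0 are well-ordered (coordinatewise comparable). -/
/-
If two points `a`, `b` of an optimal cycle carry positive weight but are not comparable,
move a small weight `ε` from `a` and `b` to `a ⊓ b` and `a ⊔ b`. Each coordinate of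
`{a ⊓ b, a ⊔ b}` is that of `{a, b}`, so the marginals still vanish; the total mass
`Σ |λᵢ|` does not grow; and the strict mixed-difference conditions make `f` strictly
supermodular, so the weighted sum grows by `ε (f(a ⊓ b) + f(a ⊔ b) - f(a) - f(b)) > 0`.
This contradicts optimality once the perturbed family, which may repeat points or carry
zero weights, is merged back into a genuine projection cycle-vector.
-/

open Set Finset

/-- Two points of `ℝ³` are well-ordered if one dominates the other coordinatewise. -/
def WellOrdered3 (a b : ℝ × ℝ × ℝ) : Prop :=
  (a.1 ≤ b.1 ∧ a.2.1 ≤ b.2.1 ∧ a.2.2 ≤ b.2.2) ∨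
  (b.1 ≤ a.1 ∧ b.2.1 ≤ a.2.1 ∧ b.2.2 ≤ a.2.2)

/-- All second mixed differences of `f` (with positive increments, inside the unit
cube) in any two distinct variables are strictly positive. -/
def StrictMixed (f : ℝ → ℝ → ℝ → ℝ) : Prop :=
  (∀ u u' v v' w, u ∈ Set.Icc (0:ℝ) 1 → u' ∈ Set.Icc (0:ℝ) 1 → v ∈ Set.Icc (0:ℝ) 1 →
    v' ∈ Set.Icc (0:ℝ) 1 → w ∈ Set.Icc (0:ℝ) 1 → u < u' → v < v' →
    0 < f u' v' w - f u' v w - f u v' w + f u v w) ∧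
  (∀ u u' w w' v, u ∈ Set.Icc (0:ℝ) 1 → u' ∈ Set.Icc (0:ℝ) 1 → w ∈ Set.Icc (0:ℝ) 1 →
    w' ∈ Set.Icc (0:ℝ) 1 → v ∈ Set.Icc (0:ℝ) 1 → u < u' → w < w' →
    0 < f u' v w' - f u' v w - f u v w' + f u v w) ∧
  (∀ v v' w w' u, v ∈ Set.Icc (0:ℝ) 1 → v' ∈ Set.Icc (0:ℝ) 1 → w ∈ Set.Icc (0:ℝ) 1 →
    w' ∈ Set.Icc (0:ℝ) 1 → u ∈ Set.Icc (0:ℝ) 1 → v < v' → w < w' →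
    0 < f u v' w' - f u v' w - f u v w' + f u v w)

/-- A projection cycle-vector in `ℝ³`: finitely many pairwise distinct points with
nonzero weights, the sums of the weights over every plane `x = ξ`, `y = ξ`, `z = ξ`
being zero. -/
def IsPCV (m : ℕ) (x : Fin m → ℝ × ℝ × ℝ) (lam : Fin m → ℝ) : Prop :=
  Function.Injective x ∧ (∀ i, lam i ≠ 0) ∧
  (∀ ξ : ℝ, ∑ i, (if (x i).1 = ξ then lam i else 0) = 0) ∧
  (∀ ξ : ℝ, ∑ i, (if (x i).2.1 = ξ then lam i else 0) = 0) ∧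
  (∀ ξ : ℝ, ∑ i, (if (x i).2.2 = ξ then lam i else 0) = 0)

/-- The normalized weighted sum `Σ λᵢ f(xᵢ) / Σ |λᵢ|`. -/
noncomputable def pcvRatio (m : ℕ) (x : Fin m → ℝ × ℝ × ℝ) (lam : Fin m → ℝ)
    (f : ℝ → ℝ → ℝ → ℝ) : ℝ :=
  (∑ i, lam i * f (x i).1 (x i).2.1 (x i).2.2) / (∑ i, |lam i|)

/-- All points lie in the grid `Sx × Sy × Sz`. -/
def PointsIn (m : ℕ) (x : Fin m → ℝ × ℝ × ℝ) (Sx Sy Sz : Finset ℝ) : Prop :=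
  ∀ i, (x i).1 ∈ Sx ∧ (x i).2.1 ∈ Sy ∧ (x i).2.2 ∈ Sz

/-- `(p,λ)` is an optimal projection cycle-vector for `f` on the grid `Sx × Sy × Sz`:
it maximizes `Σ λᵢ f(xᵢ)/Σ|λᵢ|` among all projection cycle-vectors with points in
the grid. -/
def OptimalPCV (Sx Sy Sz : Finset ℝ) (f : ℝ → ℝ → ℝ → ℝ)
    (m : ℕ) (x : Fin m → ℝ × ℝ × ℝ) (lam : Fin m → ℝ) : Prop :=
  IsPCV m x lam ∧ PointsIn m x Sx Sy Sz ∧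
  ∀ (m' : ℕ) (x' : Fin m' → ℝ × ℝ × ℝ) (lam' : Fin m' → ℝ),
    IsPCV m' x' lam' → PointsIn m' x' Sx Sy Sz →
    pcvRatio m' x' lam' f ≤ pcvRatio m x lam f

def uncurry₃ (f : ℝ → ℝ → ℝ → ℝ) (p : ℝ × ℝ × ℝ) : ℝ := f p.1 p.2.1 p.2.2

def StrictMixed₂ (g : ℝ → ℝ → ℝ) : Prop :=
  ∀ s s' t t', s ∈ Icc (0:ℝ) 1 → s' ∈ Icc (0:ℝ) 1 → t ∈ Icc (0:ℝ) 1 → t' ∈ Icc (0:ℝ) 1 →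
    s < s' → t < t' → 0 < g s' t' - g s' t - g s t' + g s t

lemma StrictMixed₂.nonneg {g : ℝ → ℝ → ℝ} (hg : StrictMixed₂ g) {s s' t t' : ℝ}
    (hs : s ∈ Icc (0:ℝ) 1) (hs' : s' ∈ Icc (0:ℝ) 1) (ht : t ∈ Icc (0:ℝ) 1)
    (ht' : t' ∈ Icc (0:ℝ) 1) (hss' : s ≤ s') (htt' : t ≤ t') :
    0 ≤ g s' t' - g s' t - g s t' + g s t := by
  rcases hss'.eq_or_lt with rfl | hss'
  · exact le_of_eq (by ring)
  rcases htt'.eq_or_lt with rfl | htt'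
  · exact le_of_eq (by ring)
  exact (hg s s' t t' hs hs' ht ht' hss' htt').le

namespace StrictMixed

variable {f : ℝ → ℝ → ℝ → ℝ}

lemma xz (hf : StrictMixed f) {v : ℝ} (hv : v ∈ Icc (0:ℝ) 1) :
    StrictMixed₂ (fun u w => f u v w) :=
  fun u u' w w' hu hu' hw hw' => hf.2.1 u u' w w' v hu hu' hw hw' hv

lemma yz (hf : StrictMixed f) {u : ℝ} (hu : u ∈ Icc (0:ℝ) 1) :
    StrictMixed₂ (fun v w => f u v w) :=
  fun v v' w w' hv hv' hw hw' => hf.2.2 v v' w w' u hv hv' hw hw' hu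

lemma rotate (hf : StrictMixed f) : StrictMixed (fun u v w => f v w u) := by
  refine ⟨fun u u' v v' w hu hu' hv hv' hw huu' hvv' => ?_,
    fun u u' w w' v hu hu' hw hw' hv huu' hww' => ?_,
    fun v v' w w' u hv hv' hw hw' hu hvv' hww' => hf.1 v v' w w' u hv hv' hw hw' hu hvv' hww'⟩
  · linarith [hf.2.1 v v' u u' w hv hv' hu hu' hw hvv' huu']
  · linarith [hf.2.2 w w' u u' v hw hw' hu hu' hv hww' huu']

lemma add_lt_add_of_swap_third (hf : StrictMixed f) {u u' v v' w w' : ℝ}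
    (hu : u ∈ Icc (0:ℝ) 1) (hu' : u' ∈ Icc (0:ℝ) 1) (hv : v ∈ Icc (0:ℝ) 1)
    (hv' : v' ∈ Icc (0:ℝ) 1) (hw : w ∈ Icc (0:ℝ) 1) (hw' : w' ∈ Icc (0:ℝ) 1)
    (huu' : u ≤ u') (hvv' : v ≤ v') (hww' : w < w') (hne : u < u' ∨ v < v') :
    f u v w' + f u' v' w < f u v w + f u' v' w' := by
  have hxz : 0 ≤ f u' v w' - f u' v w - f u v w' + f u v w :=
    (hf.xz hv).nonneg hu hu' hw hw' huu' hww'.le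
  have hyz : 0 ≤ f u' v' w' - f u' v' w - f u' v w' + f u' v w :=
    (hf.yz hu').nonneg hv hv' hw hw' hvv' hww'.le
  rcases hne with huu' | hvv'
  · linarith [hf.xz hv u u' w w' hu hu' hw hw' huu' hww']
  · linarith [hf.yz hu' v v' w w' hv hv' hw hw' hvv' hww']

theorem add_lt_inf_add_sup (hf : StrictMixed f) {a b : ℝ × ℝ × ℝ}
    (ha : a ∈ Icc (0:ℝ) 1 ×ˢ Icc (0:ℝ) 1 ×ˢ Icc (0:ℝ) 1)
    (hb : b ∈ Icc (0:ℝ) 1 ×ˢ Icc (0:ℝ) 1 ×ˢ Icc (0:ℝ) 1) (hab : ¬ WellOrdered3 a b) :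
    uncurry₃ f a + uncurry₃ f b < uncurry₃ f (a ⊓ b) + uncurry₃ f (a ⊔ b) := by
  wlog h1 : a.1 ≤ b.1 generalizing a b
  · have := this hb ha (by rwa [WellOrdered3, or_comm]) (le_of_not_ge h1)
    rwa [inf_comm, sup_comm, add_comm]
  obtain ⟨a1, a2, a3⟩ := a
  obtain ⟨b1, b2, b3⟩ := b
  obtain ⟨ha1, ha2, ha3⟩ := ha
  obtain ⟨hb1, hb2, hb3⟩ := hb
  simp only [uncurry₃, Prod.mk_inf_mk, Prod.mk_sup_mk, inf_of_le_left h1, sup_of_le_right h1]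
  -- In each case one coordinate is ordered against the other two; rotating `f` moves it last.
  rcases le_or_gt a2 b2 with h2 | h2 <;> rcases le_or_gt a3 b3 with h3 | h3
  · exact absurd (Or.inl ⟨h1, h2, h3⟩) hab
  · rw [inf_of_le_left h2, sup_of_le_right h2, inf_of_le_right h3.le, sup_of_le_left h3.le]
    refine hf.add_lt_add_of_swap_third ha1 hb1 ha2 hb2 hb3 ha3 h1 h2 h3 ?_
    by_contra! h
    exact hab (Or.inr ⟨h.1, h.2, h3.le⟩)
  · rw [inf_of_le_right h2.le, sup_of_le_left h2.le, inf_of_le_left h3, sup_of_le_right h3]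
    refine hf.rotate.add_lt_add_of_swap_third ha3 hb3 ha1 hb1 hb2 ha2 h3 h1 h2 ?_
    by_contra! h
    exact hab (Or.inr ⟨h.2, h2.le, h.1⟩)
  · rw [inf_of_le_right h2.le, sup_of_le_left h2.le, inf_of_le_right h3.le,
      sup_of_le_left h3.le]
    have h1' : a1 < b1 := h1.lt_of_ne fun h => hab (Or.inr ⟨h.ge, h2.le, h3.le⟩)
    have := hf.rotate.rotate.add_lt_add_of_swap_third hb2 ha2 hb3 ha3 ha1 hb1 h2.le h3.le h1'
      (Or.inl h2)
    linarith

end StrictMixed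

section Marginal

variable {ι α β : Type*} [Fintype ι]

def marginal [DecidableEq β] (π : α → β) (x : ι → α) (lam : ι → ℝ) (ξ : β) : ℝ :=
  ∑ i, if π (x i) = ξ then lam i else 0

lemma marginal_eq_sum_mul [DecidableEq β] (π : α → β) (x : ι → α) (lam : ι → ℝ) (ξ : β) :
    marginal π x lam ξ = ∑ i, lam i * (if π (x i) = ξ then 1 else 0) := by
  simp only [marginal, mul_boole]

def IsCycle (x : ι → ℝ × ℝ × ℝ) (lam : ι → ℝ) : Prop :=
  (∀ ξ, marginal Prod.fst x lam ξ = 0) ∧ (∀ ξ, marginal (fun p => p.2.1) x lam ξ = 0) ∧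
    (∀ ξ, marginal (fun p => p.2.2) x lam ξ = 0)

lemma isPCV_iff {m : ℕ} {x : Fin m → ℝ × ℝ × ℝ} {lam : Fin m → ℝ} :
    IsPCV m x lam ↔ Function.Injective x ∧ (∀ i, lam i ≠ 0) ∧ IsCycle x lam :=
  Iff.rfl

lemma IsCycle.of_sum_mul_eq {ι' : Type*} [Fintype ι'] {x : ι → ℝ × ℝ × ℝ} {lam : ι → ℝ}
    {y : ι' → ℝ × ℝ × ℝ} {mu : ι' → ℝ} (h : IsCycle x lam)
    (hG : ∀ G : ℝ × ℝ × ℝ → ℝ, ∑ i, mu i * G (y i) = ∑ i, lam i * G (x i)) :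
    IsCycle y mu := by
  have key : ∀ π : ℝ × ℝ × ℝ → ℝ, ∀ ξ, marginal π y mu ξ = marginal π x lam ξ := fun π ξ => by
    rw [marginal_eq_sum_mul, marginal_eq_sum_mul]
    exact hG fun p => if π p = ξ then 1 else 0
  exact ⟨fun ξ => (key _ ξ).trans (h.1 ξ), fun ξ => (key _ ξ).trans (h.2.1 ξ),
    fun ξ => (key _ ξ).trans (h.2.2 ξ)⟩

end Marginal

lemma exists_injective_merge {ι α : Type*} [Fintype ι] [DecidableEq α] (x : ι → α)
    (lam : ι → ℝ) :
    ∃ (n : ℕ) (y : Fin n → α) (mu : Fin n → ℝ), Function.Injective y ∧ (∀ i, mu i ≠ 0) ∧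
      (∀ i, y i ∈ Set.range x) ∧ (∀ G : α → ℝ, ∑ i, mu i * G (y i) = ∑ i, lam i * G (x i)) ∧
      ∑ i, |mu i| ≤ ∑ i, |lam i| := by
  set w : α → ℝ := fun p => ∑ i with x i = p, lam i
  set P : Finset α := univ.image x
  set T := P.filter (w · ≠ 0)
  have hmaps : ∀ i ∈ (univ : Finset ι), x i ∈ P :=
    fun i _ => mem_image_of_mem x (mem_univ i)
  have hsum : ∀ g : α → ℝ, ∑ i, g (T.equivFin.symm i) = ∑ p ∈ T, g p :=
    fun g => (Equiv.sum_comp T.equivFin.symm (fun p : T => g p)).trans (sum_coe_sort T g)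
  refine ⟨T.card, fun i => T.equivFin.symm i, fun i => w (T.equivFin.symm i),
    Subtype.val_injective.comp T.equivFin.symm.injective,
    fun i => (mem_filter.mp (T.equivFin.symm i).2).2, fun i => ?_, fun G => ?_, ?_⟩
  · obtain ⟨i0, -, hi0⟩ := mem_image.mp (mem_filter.mp (T.equivFin.symm i).2).1
    exact ⟨i0, hi0⟩
  · calc ∑ i, w (T.equivFin.symm i) * G (T.equivFin.symm i)
        = ∑ p ∈ P, w p * G p :=
          (hsum fun p => w p * G p).trans (sum_filter_of_ne fun _ _ h => left_ne_zero_of_mul h)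
      _ = ∑ p ∈ P, ∑ i with x i = p, lam i * G (x i) := by
          refine sum_congr rfl fun p _ => ?_
          rw [sum_mul]
          exact sum_congr rfl fun i hi => by rw [(mem_filter.mp hi).2]
      _ = ∑ i, lam i * G (x i) := sum_fiberwise_of_maps_to hmaps _
  · calc ∑ i, |w (T.equivFin.symm i)|
        = ∑ p ∈ T, |w p| := hsum fun p => |w p|
      _ ≤ ∑ p ∈ P, |w p| :=
          sum_le_sum_of_subset_of_nonneg (filter_subset _ _) fun _ _ _ => abs_nonneg _
      _ ≤ ∑ p ∈ P, ∑ i with x i = p, |lam i| :=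
          sum_le_sum fun p _ => abs_sum_le_sum_abs _ _
      _ = ∑ i, |lam i| := sum_fiberwise_of_maps_to hmaps _

section Uncross

variable {α : Type*} [Lattice α] {m : ℕ}

def uncrossPoints (x : Fin m → α) (k j : Fin m) : Fin (m + 2) → α :=
  Matrix.vecCons (x k ⊓ x j) (Matrix.vecCons (x k ⊔ x j) x)

def uncrossWeights (lam : Fin m → ℝ) (k j : Fin m) (ε : ℝ) : Fin (m + 2) → ℝ :=
  Matrix.vecCons ε (Matrix.vecCons ε
    fun i => lam i - (if i = k then ε else 0) - (if i = j then ε else 0))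

lemma sum_uncross (x : Fin m → α) (lam : Fin m → ℝ) (k j : Fin m) (ε : ℝ) (G : α → ℝ) :
    ∑ i, uncrossWeights lam k j ε i * G (uncrossPoints x k j i) =
      ∑ i, lam i * G (x i) + ε * (G (x k ⊓ x j) + G (x k ⊔ x j) - G (x k) - G (x j)) := by
  simp only [uncrossWeights, uncrossPoints, Fin.sum_univ_succ, Matrix.cons_val_zero,
    Matrix.cons_val_succ, sub_mul, ite_mul, zero_mul, sum_sub_distrib, Fintype.sum_ite_eq']
  ring

lemma sum_abs_uncrossWeights {lam : Fin m → ℝ} {k j : Fin m} (hkj : k ≠ j) {ε : ℝ}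
    (hε : 0 ≤ ε) (hk : ε ≤ lam k) (hj : ε ≤ lam j) :
    ∑ i, |uncrossWeights lam k j ε i| = ∑ i, |lam i| := by
  have key : ∀ i, |lam i - (if i = k then ε else 0) - (if i = j then ε else 0)| =
      |lam i| - (if i = k then ε else 0) - (if i = j then ε else 0) := by
    intro i
    by_cases hik : i = k
    · subst hik
      simp [hkj, abs_of_nonneg (hε.trans hk), abs_of_nonneg (sub_nonneg.mpr hk)]
    by_cases hij : i = j
    · subst hij
      simp [hik, abs_of_nonneg (hε.trans hj), abs_of_nonneg (sub_nonneg.mpr hj)]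
    simp [hik, hij]
  simp only [uncrossWeights, Fin.sum_univ_succ, Matrix.cons_val_zero, Matrix.cons_val_succ, key,
    sum_sub_distrib, Fintype.sum_ite_eq', abs_of_nonneg hε]
  ring

lemma ite_inf_add_ite_sup {β : Type*} [LinearOrder β] (s t ξ : β) :
    ((if s ⊓ t = ξ then 1 else 0) + (if s ⊔ t = ξ then 1 else 0) : ℝ) =
      (if s = ξ then 1 else 0) + (if t = ξ then 1 else 0) := by
  rcases le_total s t with h | h
  · rw [inf_of_le_left h, sup_of_le_right h]
  · rw [inf_of_le_right h, sup_of_le_left h, add_comm]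

lemma marginal_uncross {β : Type*} [LinearOrder β] {π : α → β}
    (hinf : ∀ a b, π (a ⊓ b) = π a ⊓ π b) (hsup : ∀ a b, π (a ⊔ b) = π a ⊔ π b)
    (x : Fin m → α) (lam : Fin m → ℝ) (k j : Fin m) (ε : ℝ) (ξ : β) :
    marginal π (uncrossPoints x k j) (uncrossWeights lam k j ε) ξ = marginal π x lam ξ := by
  rw [marginal_eq_sum_mul, marginal_eq_sum_mul,
    sum_uncross x lam k j ε fun p => if π p = ξ then 1 else 0]
  simp only [hinf, hsup, ite_inf_add_ite_sup]
  ring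

lemma IsCycle.uncross {x : Fin m → ℝ × ℝ × ℝ} {lam : Fin m → ℝ} (h : IsCycle x lam)
    (k j : Fin m) (ε : ℝ) : IsCycle (uncrossPoints x k j) (uncrossWeights lam k j ε) :=
  ⟨fun ξ => (marginal_uncross (fun _ _ => rfl) (fun _ _ => rfl) x lam k j ε ξ).trans (h.1 ξ),
    fun ξ => (marginal_uncross (fun _ _ => rfl) (fun _ _ => rfl) x lam k j ε ξ).trans (h.2.1 ξ),
    fun ξ => (marginal_uncross (fun _ _ => rfl) (fun _ _ => rfl) x lam k j ε ξ).trans (h.2.2 ξ)⟩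

lemma PointsIn.uncross {x : Fin m → ℝ × ℝ × ℝ} {Sx Sy Sz : Finset ℝ}
    (h : PointsIn m x Sx Sy Sz) (k j : Fin m) :
    PointsIn (m + 2) (uncrossPoints x k j) Sx Sy Sz := by
  have hk := h k
  have hj := h j
  intro i
  refine Fin.cases ?_ (Fin.cases ?_ fun i => ?_) i
  · exact ⟨inf_ind _ _ hk.1 hj.1, inf_ind _ _ hk.2.1 hj.2.1, inf_ind _ _ hk.2.2 hj.2.2⟩
  · exact ⟨sup_ind _ _ hk.1 hj.1, sup_ind _ _ hk.2.1 hj.2.1, sup_ind _ _ hk.2.2 hj.2.2⟩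
  · exact h i

end Uncross

lemma sum_mul_le_of_pcvRatio_le {m : ℕ} {x : Fin m → ℝ × ℝ × ℝ} {lam : Fin m → ℝ}
    {f : ℝ → ℝ → ℝ → ℝ} {r : ℝ} (h : pcvRatio m x lam f ≤ r) :
    ∑ i, lam i * uncurry₃ f (x i) ≤ r * ∑ i, |lam i| := by
  rcases (sum_nonneg fun i _ => abs_nonneg (lam i)).eq_or_lt with hD | hD
  · have hlam : ∀ i, lam i = 0 := fun i =>
      abs_eq_zero.mp ((sum_eq_zero_iff_of_nonneg fun i _ => abs_nonneg _).mp hD.symm i (mem_univ i))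
    simp [hlam]
  · exact (div_le_iff₀ hD).mp h

namespace OptimalPCV

variable {Sx Sy Sz : Finset ℝ} {f : ℝ → ℝ → ℝ → ℝ} {m : ℕ} {x : Fin m → ℝ × ℝ × ℝ}
  {lam : Fin m → ℝ}

lemma pcvRatio_nonneg (hopt : OptimalPCV Sx Sy Sz f m x lam) : 0 ≤ pcvRatio m x lam f := by
  -- the empty cycle-vector competes, with ratio `0 / 0 = 0`
  have hempty : IsPCV 0 Fin.elim0 Fin.elim0 :=
    ⟨fun i => i.elim0, fun i => i.elim0, by simp, by simp, by simp⟩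
  simpa [pcvRatio] using hopt.2.2 0 Fin.elim0 Fin.elim0 hempty fun i => i.elim0

theorem sum_mul_le (hopt : OptimalPCV Sx Sy Sz f m x lam) {n : ℕ} {y : Fin n → ℝ × ℝ × ℝ}
    {mu : Fin n → ℝ} (hy : IsCycle y mu) (hS : PointsIn n y Sx Sy Sz) :
    ∑ i, mu i * uncurry₃ f (y i) ≤ pcvRatio m x lam f * ∑ i, |mu i| := by
  obtain ⟨n', y', mu', hinj, hne, hrange, hG, habs⟩ := exists_injective_merge y mu
  have hS' : PointsIn n' y' Sx Sy Sz := fun i => by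
    obtain ⟨i0, hi0⟩ := hrange i
    exact hi0 ▸ hS i0
  calc ∑ i, mu i * uncurry₃ f (y i)
      = ∑ i, mu' i * uncurry₃ f (y' i) := (hG _).symm
    _ ≤ pcvRatio m x lam f * ∑ i, |mu' i| :=
        sum_mul_le_of_pcvRatio_le (hopt.2.2 n' y' mu' ⟨hinj, hne, hy.of_sum_mul_eq hG⟩ hS')
    _ ≤ pcvRatio m x lam f * ∑ i, |mu i| := mul_le_mul_of_nonneg_left habs hopt.pcvRatio_nonneg

end OptimalPCV

theorem stmt_5_general (f : ℝ → ℝ → ℝ → ℝ)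
    (hf : StrictMixed f)
    (Sx Sy Sz : Finset ℝ)
    (hSx : (Sx : Set ℝ) ⊆ Icc (0:ℝ) 1) (hSy : (Sy : Set ℝ) ⊆ Icc (0:ℝ) 1)
    (hSz : (Sz : Set ℝ) ⊆ Icc (0:ℝ) 1)
    (m : ℕ) (x : Fin m → ℝ × ℝ × ℝ) (lam : Fin m → ℝ)
    (hopt : OptimalPCV Sx Sy Sz f m x lam) :
    ∀ k j : Fin m, 0 < lam k → 0 < lam j → WellOrdered3 (x k) (x j) := by
  intro k j hk hj
  by_contra hinc
  have hkj : k ≠ j := by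
    rintro rfl
    exact hinc (Or.inl ⟨le_rfl, le_rfl, le_rfl⟩)
  have hcube (i : Fin m) : x i ∈ Icc (0:ℝ) 1 ×ˢ Icc (0:ℝ) 1 ×ˢ Icc (0:ℝ) 1 :=
    ⟨hSx (hopt.2.1 i).1, hSy (hopt.2.1 i).2.1, hSz (hopt.2.1 i).2.2⟩
  have hgain := hf.add_lt_inf_add_sup (hcube k) (hcube j) hinc
  set ε := min (lam k) (lam j)
  have hε : 0 < ε := lt_min hk hj
  have hcyc : IsCycle x lam := (isPCV_iff.mp hopt.1).2.2
  have hle := hopt.sum_mul_le (hcyc.uncross k j ε) (hopt.2.1.uncross k j)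
  rw [sum_uncross, sum_abs_uncrossWeights hkj hε.le (min_le_left _ _) (min_le_right _ _)] at hle
  have hD : 0 < ∑ i, |lam i| :=
    sum_pos' (fun i _ => abs_nonneg _) ⟨k, mem_univ k, abs_pos.mpr hk.ne'⟩
  have hratio : pcvRatio m x lam f * ∑ i, |lam i| = ∑ i, lam i * uncurry₃ f (x i) :=
    div_mul_cancel₀ _ hD.ne'
  linarith [mul_pos hε (sub_pos.mpr hgain)]

theorem stmt_5 (f : ℝ → ℝ → ℝ → ℝ)
    (hcont : ContinuousOn (fun p : ℝ × ℝ × ℝ => f p.1 p.2.1 p.2.2)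
      (Icc (0:ℝ) 1 ×ˢ Icc (0:ℝ) 1 ×ˢ Icc (0:ℝ) 1))
    (hf : StrictMixed f)
    (Sx Sy Sz : Finset ℝ)
    (hSx : (Sx : Set ℝ) ⊆ Icc (0:ℝ) 1) (hSy : (Sy : Set ℝ) ⊆ Icc (0:ℝ) 1)
    (hSz : (Sz : Set ℝ) ⊆ Icc (0:ℝ) 1)
    (h01 : ({0, 1} : Finset ℝ) ⊆ Sx ∩ Sy ∩ Sz)
    (m : ℕ) (x : Fin m → ℝ × ℝ × ℝ) (lam : Fin m → ℝ)
    (hopt : OptimalPCV Sx Sy Sz f m x lam) :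
    ∀ k j : Fin m, 0 < lam k → 0 < lam j → WellOrdered3 (x k) (x j) :=
  stmt_5_general f hf Sx Sy Sz hSx hSy hSz m x lam hopt
end

section
/- Let f be continuous on [0,1]³ satisfying the strict mixed-difference conditions, and let (p,λ) be an optimal projection cycle-vector for f on a finite grid S = S_x × S_y × S_z with {0,1} ⊂ S_x ∩ S_y ∩ S_z. If λ_i < 0 for some point x_i ∈ p, then x_i lies on one of the six edges of the unit cube that contain neither the vertex (0,0,0) nor the vertex (1,1,1). -/
open Set Finset

/-- The six edges of the unit cube containing neither `(0,0,0)` nor `(1,1,1)`. -/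
def OffDiagonalEdges : Set (ℝ × ℝ × ℝ) :=
  {p | p.1 ∈ Set.Icc (0:ℝ) 1 ∧ p.2.1 = 0 ∧ p.2.2 = 1} ∪
  {p | p.1 = 1 ∧ p.2.1 = 0 ∧ p.2.2 ∈ Set.Icc (0:ℝ) 1} ∪
  {p | p.1 = 1 ∧ p.2.1 ∈ Set.Icc (0:ℝ) 1 ∧ p.2.2 = 0} ∪
  {p | p.1 ∈ Set.Icc (0:ℝ) 1 ∧ p.2.1 = 1 ∧ p.2.2 = 0} ∪
  {p | p.1 = 0 ∧ p.2.1 = 1 ∧ p.2.2 ∈ Set.Icc (0:ℝ) 1} ∪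
  {p | p.1 = 0 ∧ p.2.1 ∈ Set.Icc (0:ℝ) 1 ∧ p.2.2 = 1}

def StrictSupermodularOn {α : Type*} [Lattice α] (F : α → ℝ) (s : Set α) : Prop :=
  ∀ ⦃p⦄, p ∈ s → ∀ ⦃q⦄, q ∈ s → ¬p ≤ q → ¬q ≤ p → F p + F q < F (p ⊔ q) + F (p ⊓ q)

theorem StrictSupermodularOn.add_le_sup_add_inf {α : Type*} [Lattice α] {F : α → ℝ} {s : Set α}
    (hF : StrictSupermodularOn F s) {p q : α} (hp : p ∈ s) (hq : q ∈ s) :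
    F p + F q ≤ F (p ⊔ q) + F (p ⊓ q) := by
  by_cases hpq : p ≤ q
  · rw [sup_eq_right.mpr hpq, inf_eq_left.mpr hpq, add_comm]
  by_cases hqp : q ≤ p
  · rw [sup_eq_left.mpr hqp, inf_eq_right.mpr hqp]
  exact (hF hp hq hpq hqp).le

theorem StrictSupermodularOn.mono {α : Type*} [Lattice α] {F : α → ℝ} {s t : Set α}
    (hF : StrictSupermodularOn F t) (hst : s ⊆ t) : StrictSupermodularOn F s :=
  fun _ hp _ hq => hF (hst hp) (hst hq)

theorem strictSupermodularOn_of_mixed_pos {g : ℝ → ℝ → ℝ} {I : Set ℝ}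
    (hg : ∀ y y' z z', y ∈ I → y' ∈ I → z ∈ I → z' ∈ I → y < y' → z < z' →
      0 < g y' z' - g y' z - g y z' + g y z) :
    StrictSupermodularOn (fun P : ℝ × ℝ => g P.1 P.2) (I ×ˢ I) := by
  rintro ⟨y, z⟩ ⟨hy, hz⟩ ⟨y', z'⟩ ⟨hy', hz'⟩ hpq hqp
  simp only [Prod.mk_le_mk, not_and_or, not_le] at hpq hqp
  simp only [Prod.mk_sup_mk, Prod.mk_inf_mk]
  rcases hpq with h | h <;> rcases hqp with h' | h'
  · linarith
  · rw [max_eq_left h.le, max_eq_right h'.le, min_eq_right h.le, min_eq_left h'.le]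
    linarith [hg y' y z z' hy' hy hz hz' h h']
  · rw [max_eq_right h'.le, max_eq_left h.le, min_eq_left h'.le, min_eq_right h.le]
    linarith [hg y y' z' z hy hy' hz' hz h' h]
  · linarith

theorem StrictMixed.sub_lt_sub_of_lt {f : ℝ → ℝ → ℝ → ℝ} (hf : StrictMixed f) {s t : ℝ}
    (hs : s ∈ Icc (0:ℝ) 1) (ht : t ∈ Icc (0:ℝ) 1) (hst : s < t) {P Q : ℝ × ℝ}
    (hP : P ∈ Icc (0:ℝ) 1 ×ˢ Icc (0:ℝ) 1) (hQ : Q ∈ Icc (0:ℝ) 1 ×ˢ Icc (0:ℝ) 1) (hPQ : P < Q) :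
    f t P.1 P.2 - f s P.1 P.2 < f t Q.1 Q.2 - f s Q.1 Q.2 := by
  obtain ⟨hy, hz⟩ := hP
  obtain ⟨hy', hz'⟩ := hQ
  rcases Prod.lt_iff.mp hPQ with ⟨hlt, hle⟩ | ⟨hle, hlt⟩
  · have := hf.1 s t P.1 Q.1 Q.2 hs ht hy hy' hz' hst hlt
    rcases hle.eq_or_lt with heq | hle
    · rw [heq]; linarith
    · linarith [hf.2.1 s t P.2 Q.2 P.1 hs ht hz hz' hy hst hle]
  · have := hf.2.1 s t P.2 Q.2 Q.1 hs ht hz hz' hy' hst hlt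
    rcases hle.eq_or_lt with heq | hle
    · rw [heq]; linarith
    · linarith [hf.1 s t P.1 Q.1 P.2 hs ht hy hy' hz hst hle]

theorem StrictMixed.strictSupermodularOn {f : ℝ → ℝ → ℝ → ℝ} (hf : StrictMixed f) :
    StrictSupermodularOn (uncurry₃ f) (Icc (0:ℝ) 1 ×ˢ Icc (0:ℝ) 1 ×ˢ Icc (0:ℝ) 1) := by
  intro p hp q hq hpq hqp
  wlog hst : p.1 ≤ q.1 generalizing p q
  · have := this hq hp hqp hpq (le_of_not_ge hst)
    rwa [add_comm, sup_comm, inf_comm] at this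
  obtain ⟨s, P⟩ := p
  obtain ⟨t, Q⟩ := q
  obtain ⟨hs, hP⟩ := hp
  obtain ⟨ht, hQ⟩ := hq
  have hsquare (u : ℝ) (hu : u ∈ Icc (0:ℝ) 1) :
      StrictSupermodularOn (fun P : ℝ × ℝ => f u P.1 P.2) (Icc (0:ℝ) 1 ×ˢ Icc (0:ℝ) 1) :=
    strictSupermodularOn_of_mixed_pos fun v v' w w' hv hv' hw hw' hvv' hww' =>
      hf.2.2 v v' w w' u hv hv' hw hw' hu hvv' hww'
  have hPQ : ¬P ≤ Q := fun h => hpq ⟨hst, h⟩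
  simp only [uncurry₃, Prod.mk_sup_mk, Prod.mk_inf_mk]
  rcases hst.eq_or_lt with rfl | hst
  · simpa only [sup_idem, inf_idem] using hsquare s hs hP hQ hPQ fun h => hqp ⟨le_rfl, h⟩
  · rw [sup_of_le_right hst.le, inf_of_le_left hst.le]
    have hsup : P ⊔ Q ∈ Icc (0:ℝ) 1 ×ˢ Icc (0:ℝ) 1 :=
      ((LinearOrder.isSublattice _).prod (LinearOrder.isSublattice _)).supClosed hP hQ
    have hlt : Q < P ⊔ Q := lt_of_le_of_ne le_sup_right fun h => hPQ (h ▸ le_sup_left)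
    have := (hsquare s hs).add_le_sup_add_inf hP hQ
    have := hf.sub_lt_sub_of_lt hs ht hst hQ hsup hlt
    linarith

open Filter Topology

/-- The right derivative of `ε ↦ |m + ε * c|` at `0`. -/
noncomputable def absDirDeriv (m c : ℝ) : ℝ := if 0 < m then c else if m < 0 then -c else |c|

theorem absDirDeriv_of_pos {m : ℝ} (hm : 0 < m) (c : ℝ) : absDirDeriv m c = c := if_pos hm

theorem absDirDeriv_of_neg {m : ℝ} (hm : m < 0) (c : ℝ) : absDirDeriv m c = -c := by
  rw [absDirDeriv, if_neg hm.not_gt, if_pos hm]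

@[simp] theorem absDirDeriv_zero_right (m : ℝ) : absDirDeriv m 0 = 0 := by
  unfold absDirDeriv; split_ifs <;> simp

theorem absDirDeriv_le_abs (m c : ℝ) : absDirDeriv m c ≤ |c| := by
  unfold absDirDeriv; split_ifs
  exacts [le_abs_self c, neg_le_abs c, le_rfl]

theorem absDirDeriv_add_le (m c d : ℝ) :
    absDirDeriv m (c + d) ≤ absDirDeriv m c + absDirDeriv m d := by
  unfold absDirDeriv; split_ifs
  exacts [le_rfl, (neg_add c d).le, abs_add_le c d]

theorem eventually_abs_add_mul (m c : ℝ) :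
    ∀ᶠ ε in 𝓝[>] (0 : ℝ), |m + ε * c| = |m| + ε * absDirDeriv m c := by
  have hcont : Continuous fun ε : ℝ => m + ε * c := by fun_prop
  rcases lt_trichotomy m 0 with hm | rfl | hm
  · have hneg : ∀ᶠ ε in 𝓝 (0 : ℝ), m + ε * c < 0 :=
      hcont.continuousAt.eventually (gt_mem_nhds (by simpa using hm))
    filter_upwards [nhdsWithin_le_nhds hneg] with ε hε
    rw [abs_of_neg hε, abs_of_neg hm, absDirDeriv_of_neg hm]
    ring
  · filter_upwards [self_mem_nhdsWithin] with ε (hε : 0 < ε)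
    simp [absDirDeriv, abs_mul, abs_of_pos hε]
  · have hpos : ∀ᶠ ε in 𝓝 (0 : ℝ), 0 < m + ε * c :=
      hcont.continuousAt.eventually (lt_mem_nhds (by simpa using hm))
    filter_upwards [nhdsWithin_le_nhds hpos] with ε hε
    rw [abs_of_pos hε, abs_of_pos hm, absDirDeriv_of_pos hm]

def gridCycles (G : Finset (ℝ × ℝ × ℝ)) : Submodule ℝ (ℝ × ℝ × ℝ → ℝ) where
  carrier := {ν | (∀ ξ, ∑ g ∈ G with g.1 = ξ, ν g = 0) ∧ (∀ ξ, ∑ g ∈ G with g.2.1 = ξ, ν g = 0) ∧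
    (∀ ξ, ∑ g ∈ G with g.2.2 = ξ, ν g = 0)}
  add_mem' {μ ν} hμ hν := by
    refine ⟨fun ξ => ?_, fun ξ => ?_, fun ξ => ?_⟩ <;>
      simp [sum_add_distrib, hμ.1 ξ, hμ.2.1 ξ, hμ.2.2 ξ, hν.1 ξ, hν.2.1 ξ, hν.2.2 ξ]
  zero_mem' := by simp
  smul_mem' c ν hν := by
    refine ⟨fun ξ => ?_, fun ξ => ?_, fun ξ => ?_⟩ <;>
      simp [← mul_sum, hν.1 ξ, hν.2.1 ξ, hν.2.2 ξ]

section LatticeQuad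

variable {α : Type*} [DecidableEq α] {G : Finset α}

theorem sum_absDirDeriv_single (μ : α → ℝ) {a : α} (ha : a ∈ G) (c : ℝ) :
    ∑ g ∈ G, absDirDeriv (μ g) ((Pi.single a c : α → ℝ) g) = absDirDeriv (μ a) c := by
  simp [Pi.single_apply, apply_ite, ha]

variable [Lattice α]

noncomputable def latticeQuad (p q : α) : α → ℝ :=
  Pi.single (p ⊓ q) 1 + Pi.single p (-1) + Pi.single q (-1) + Pi.single (p ⊔ q) 1

variable {p q : α}

theorem sum_latticeQuad_mul (hp : p ∈ G) (hq : q ∈ G) (hinf : p ⊓ q ∈ G) (hsup : p ⊔ q ∈ G)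
    (F : α → ℝ) :
    ∑ g ∈ G, latticeQuad p q g * F g = F (p ⊓ q) - F p - F q + F (p ⊔ q) := by
  simp [latticeQuad, add_mul, sum_add_distrib, Pi.single_apply, ite_mul, hp, hq, hinf, hsup]
  ring

theorem sum_absDirDeriv_latticeQuad_le (μ : α → ℝ) (hp : p ∈ G) (hq : q ∈ G)
    (hinf : p ⊓ q ∈ G) (hsup : p ⊔ q ∈ G) :
    ∑ g ∈ G, absDirDeriv (μ g) (latticeQuad p q g) ≤ absDirDeriv (μ (p ⊓ q)) 1 +
      absDirDeriv (μ p) (-1) + absDirDeriv (μ q) (-1) + absDirDeriv (μ (p ⊔ q)) 1 := by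
  rw [← sum_absDirDeriv_single μ hinf, ← sum_absDirDeriv_single μ hp,
    ← sum_absDirDeriv_single μ hq, ← sum_absDirDeriv_single μ hsup, ← sum_add_distrib,
    ← sum_add_distrib, ← sum_add_distrib]
  refine sum_le_sum fun g _ => ?_
  simp only [latticeQuad, Pi.add_apply]
  exact (absDirDeriv_add_le _ _ _).trans <| add_le_add_left ((absDirDeriv_add_le _ _ _).trans <|
    add_le_add_left (absDirDeriv_add_le _ _ _) _) _

end LatticeQuad

theorem ite_inf_add_ite_sup_eq_zero {a b ξ : ℝ} :
    ((if a ⊓ b = ξ then 1 else 0) + (if a = ξ then -1 else 0) + (if b = ξ then -1 else 0) +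
      (if a ⊔ b = ξ then 1 else 0) : ℝ) = 0 := by
  rcases le_total a b with h | h
  · simp only [inf_of_le_left h, sup_of_le_right h]; split_ifs <;> ring
  · simp only [inf_of_le_right h, sup_of_le_left h]; split_ifs <;> ring

theorem latticeQuad_mem_gridCycles {G : Finset (ℝ × ℝ × ℝ)} {p q : ℝ × ℝ × ℝ} (hp : p ∈ G)
    (hq : q ∈ G) (hinf : p ⊓ q ∈ G) (hsup : p ⊔ q ∈ G) : latticeQuad p q ∈ gridCycles G := by
  refine ⟨fun ξ => ?_, fun ξ => ?_, fun ξ => ?_⟩ <;>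
    simpa [latticeQuad, sum_add_distrib, Finset.sum_pi_single', hp, hq, hinf, hsup,
      ite_and] using ite_inf_add_ite_sup_eq_zero

theorem sum_extend_eq {ι α : Type*} [Fintype ι] {x : ι → α} (hx : Function.Injective x)
    {G : Finset α} (hxG : ∀ j, x j ∈ G) (lam : ι → ℝ) (Φ : ℝ → α → ℝ) (hΦ : ∀ g, Φ 0 g = 0) :
    ∑ g ∈ G, Φ (Function.extend x lam 0 g) g = ∑ j, Φ (lam j) (x j) := by
  rw [← sum_subset (s₁ := univ.map ⟨x, hx⟩), sum_map]
  · simp [hx.extend_apply]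
  · simpa [subset_iff] using hxG
  · intro g _ hg
    rw [Function.extend_apply' _ _ _ (by simpa using hg), Pi.zero_apply, hΦ]

theorem IsPCV.extend_mem_gridCycles {m : ℕ} {x : Fin m → ℝ × ℝ × ℝ} {lam : Fin m → ℝ}
    (hpcv : IsPCV m x lam) {G : Finset (ℝ × ℝ × ℝ)} (hxG : ∀ j, x j ∈ G) :
    Function.extend x lam 0 ∈ gridCycles G := by
  obtain ⟨hx, -, h1, h2, h3⟩ := hpcv
  refine ⟨fun ξ => ?_, fun ξ => ?_, fun ξ => ?_⟩
  · simpa [sum_filter, sum_extend_eq hx hxG lam (fun c g => if g.1 = ξ then c else 0)] using h1 ξ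
  · simpa [sum_filter, sum_extend_eq hx hxG lam (fun c g => if g.2.1 = ξ then c else 0)] using h2 ξ
  · simpa [sum_filter, sum_extend_eq hx hxG lam (fun c g => if g.2.2 = ξ then c else 0)] using h3 ξ

theorem exists_isPCV_of_mem_gridCycles {G : Finset (ℝ × ℝ × ℝ)} {ν : ℝ × ℝ × ℝ → ℝ}
    (hν : ν ∈ gridCycles G) :
    ∃ (m : ℕ) (x : Fin m → ℝ × ℝ × ℝ) (lam : Fin m → ℝ), IsPCV m x lam ∧ (∀ j, x j ∈ G) ∧
      ∀ g ∈ G, Function.extend x lam 0 g = ν g := by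
  set T := G.filter (ν · ≠ 0)
  let x : Fin T.card → ℝ × ℝ × ℝ := fun j => T.equivFin.symm j
  have hx : Function.Injective x := Subtype.val_injective.comp T.equivFin.symm.injective
  have hxT (j) : x j ∈ T := (T.equivFin.symm j).2
  have hxG (j) : x j ∈ G := (mem_filter.1 (hxT j)).1
  have hext : ∀ g ∈ G, Function.extend x (ν ∘ x) 0 g = ν g := by
    intro g hg
    by_cases hνg : ν g = 0
    · rw [Function.extend_apply', hνg, Pi.zero_apply]
      rintro ⟨j, rfl⟩
      exact (mem_filter.1 (hxT j)).2 hνg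
    · have hgT : g ∈ T := mem_filter.2 ⟨hg, hνg⟩
      have : x (T.equivFin ⟨g, hgT⟩) = g := by simp [x]
      rw [← this, hx.extend_apply, Function.comp_apply]
  have hsum (Φ : ℝ → ℝ × ℝ × ℝ → ℝ) (hΦ : ∀ g, Φ 0 g = 0) :
      ∑ j, Φ (ν (x j)) (x j) = ∑ g ∈ G, Φ (ν g) g := by
    rw [← sum_congr rfl fun g hg => congrArg (Φ · g) (hext g hg)]
    exact (sum_extend_eq hx hxG (ν ∘ x) Φ hΦ).symm
  refine ⟨T.card, x, ν ∘ x, ⟨hx, fun j => (mem_filter.1 (hxT j)).2, fun ξ => ?_, fun ξ => ?_,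
    fun ξ => ?_⟩, hxG, hext⟩
  · simpa [← sum_filter, hsum (fun c g => if g.1 = ξ then c else 0)] using hν.1 ξ
  · simpa [← sum_filter, hsum (fun c g => if g.2.1 = ξ then c else 0)] using hν.2.1 ξ
  · simpa [← sum_filter, hsum (fun c g => if g.2.2 = ξ then c else 0)] using hν.2.2 ξ

/-- `μ` is a cycle on `G` maximizing `∑ ν F / ∑ |ν|` over all cycles `ν` on `G`, with the ratios
compared cross-multiplied. -/
structure IsOptimalCycle (G : Finset (ℝ × ℝ × ℝ)) (F μ : ℝ × ℝ × ℝ → ℝ) : Prop where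
  mem : μ ∈ gridCycles G
  sum_abs_pos : 0 < ∑ g ∈ G, |μ g|
  ratio_le : ∀ ν ∈ gridCycles G,
    (∑ g ∈ G, ν g * F g) * ∑ g ∈ G, |μ g| ≤ (∑ g ∈ G, μ g * F g) * ∑ g ∈ G, |ν g|

theorem OptimalPCV.isOptimalCycle {Sx Sy Sz : Finset ℝ} {f : ℝ → ℝ → ℝ → ℝ} {m : ℕ}
    {x : Fin m → ℝ × ℝ × ℝ} {lam : Fin m → ℝ} (hopt : OptimalPCV Sx Sy Sz f m x lam) (i : Fin m) :
    IsOptimalCycle (Sx ×ˢ Sy ×ˢ Sz) (uncurry₃ f) (Function.extend x lam 0) := by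
  obtain ⟨hpcv, hpts, hmax⟩ := hopt
  have hPointsIn {m' : ℕ} {x' : Fin m' → ℝ × ℝ × ℝ} :
      PointsIn m' x' Sx Sy Sz ↔ ∀ j, x' j ∈ Sx ×ˢ Sy ×ˢ Sz := by
    simp [PointsIn, mem_product]
  have hxG := hPointsIn.1 hpts
  have hN := sum_extend_eq hpcv.1 hxG lam (fun c g => c * uncurry₃ f g) (by simp)
  have hD := sum_extend_eq hpcv.1 hxG lam (fun c _ => |c|) (by simp)
  have hDpos : 0 < ∑ j, |lam j| :=
    (abs_pos.2 (hpcv.2.1 i)).trans_le (single_le_sum (fun j _ => abs_nonneg (lam j)) (mem_univ i))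
  refine ⟨hpcv.extend_mem_gridCycles hxG, hD ▸ hDpos, fun ν hν => ?_⟩
  obtain ⟨m', x', lam', hpcv', hx'G, hext⟩ := exists_isPCV_of_mem_gridCycles hν
  have hN' := sum_extend_eq hpcv'.1 hx'G lam' (fun c g => c * uncurry₃ f g) (by simp)
  have hD' := sum_extend_eq hpcv'.1 hx'G lam' (fun c _ => |c|) (by simp)
  rw [sum_congr rfl fun g hg => by rw [hext g hg]] at hN' hD'
  have hratio := hmax m' x' lam' hpcv' (hPointsIn.2 hx'G)
  simp only [pcvRatio] at hratio
  rw [hN, hD, hN', hD']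
  rcases (sum_nonneg fun j _ => abs_nonneg (lam' j) : 0 ≤ ∑ j, |lam' j|).eq_or_lt with h0 | hpos
  · have : ∀ j, lam' j = 0 := fun j => abs_eq_zero.1 <|
      (sum_eq_zero_iff_of_nonneg fun j _ => abs_nonneg _).1 h0.symm j (mem_univ j)
    simp [this]
  · exact (div_le_div_iff₀ hpos hDpos).1 hratio

namespace IsOptimalCycle

variable {G : Finset (ℝ × ℝ × ℝ)} {F μ : ℝ × ℝ × ℝ → ℝ}

theorem sum_mul_nonneg (h : IsOptimalCycle G F μ) : 0 ≤ ∑ g ∈ G, μ g * F g := by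
  have := h.ratio_le (-μ) (neg_mem h.mem)
  simp only [Pi.neg_apply, neg_mul, sum_neg_distrib, abs_neg] at this
  nlinarith [h.sum_abs_pos]

theorem sum_mul_nonpos (h : IsOptimalCycle G F μ) {ν : ℝ × ℝ × ℝ → ℝ} (hν : ν ∈ gridCycles G)
    (hW : ∑ g ∈ G, absDirDeriv (μ g) (ν g) ≤ 0) : ∑ g ∈ G, ν g * F g ≤ 0 := by
  obtain ⟨ε, hε, hεpos : 0 < ε⟩ := (((eventually_all_finset G).2 fun g _ =>
    eventually_abs_add_mul (μ g) (ν g)).and self_mem_nhdsWithin).exists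
  have hle := h.ratio_le (μ + ε • ν) (add_mem h.mem (Submodule.smul_mem _ ε hν))
  simp only [Pi.add_apply, Pi.smul_apply, smul_eq_mul, add_mul, sum_add_distrib, mul_assoc,
    ← mul_sum, sum_congr rfl hε] at hle
  have hNW : (∑ g ∈ G, μ g * F g) * ∑ g ∈ G, absDirDeriv (μ g) (ν g) ≤ 0 :=
    mul_nonpos_of_nonneg_of_nonpos h.sum_mul_nonneg hW
  have hε' : ε * ((∑ g ∈ G, ν g * F g) * ∑ g ∈ G, |μ g|) ≤
      ε * ((∑ g ∈ G, μ g * F g) * ∑ g ∈ G, absDirDeriv (μ g) (ν g)) := by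
    linarith
  exact nonpos_of_mul_nonpos_left ((le_of_mul_le_mul_left hε' hεpos).trans hNW) h.sum_abs_pos

variable {p q : ℝ × ℝ × ℝ}

theorem le_or_le_of_absDirDeriv_nonpos (h : IsOptimalCycle G F μ) (hF : StrictSupermodularOn F G)
    (hG : IsSublattice (G : Set (ℝ × ℝ × ℝ))) (hp : p ∈ G) (hq : q ∈ G)
    (hW : absDirDeriv (μ (p ⊓ q)) 1 + absDirDeriv (μ p) (-1) + absDirDeriv (μ q) (-1) +
      absDirDeriv (μ (p ⊔ q)) 1 ≤ 0) : p ≤ q ∨ q ≤ p := by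
  by_contra! hpq
  have hinf : p ⊓ q ∈ G := hG.infClosed hp hq
  have hsup : p ⊔ q ∈ G := hG.supClosed hp hq
  have := h.sum_mul_nonpos (latticeQuad_mem_gridCycles hp hq hinf hsup)
    ((sum_absDirDeriv_latticeQuad_le μ hp hq hinf hsup).trans hW)
  rw [sum_latticeQuad_mul hp hq hinf hsup] at this
  linarith [hF hp hq hpq.1 hpq.2]

theorem isChain_pos (h : IsOptimalCycle G F μ) (hF : StrictSupermodularOn F G)
    (hG : IsSublattice (G : Set (ℝ × ℝ × ℝ))) : IsChain (· ≤ ·) {p | p ∈ G ∧ 0 < μ p} := by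
  rintro p ⟨hp, hμp⟩ q ⟨hq, hμq⟩ -
  refine h.le_or_le_of_absDirDeriv_nonpos hF hG hp hq ?_
  rw [absDirDeriv_of_pos hμp, absDirDeriv_of_pos hμq]
  linarith [absDirDeriv_le_abs (μ (p ⊓ q)) 1, absDirDeriv_le_abs (μ (p ⊔ q)) 1, abs_one (α := ℝ)]

theorem le_of_inf_neg (h : IsOptimalCycle G F μ) (hF : StrictSupermodularOn F G)
    (hG : IsSublattice (G : Set (ℝ × ℝ × ℝ))) (hp : p ∈ G) (hq : q ∈ G) (hμp : 0 < μ p)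
    (hμpq : μ (p ⊓ q) < 0) : q ≤ p := by
  refine (h.le_or_le_of_absDirDeriv_nonpos hF hG hp hq ?_).resolve_left fun hpq => ?_
  · rw [absDirDeriv_of_neg hμpq, absDirDeriv_of_pos hμp]
    linarith [absDirDeriv_le_abs (μ q) (-1), absDirDeriv_le_abs (μ (p ⊔ q)) 1, abs_one (α := ℝ),
      abs_neg (1 : ℝ)]
  · rw [inf_eq_left.2 hpq] at hμpq
    linarith

theorem le_of_sup_neg (h : IsOptimalCycle G F μ) (hF : StrictSupermodularOn F G)
    (hG : IsSublattice (G : Set (ℝ × ℝ × ℝ))) (hp : p ∈ G) (hq : q ∈ G) (hμp : 0 < μ p)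
    (hμpq : μ (p ⊔ q) < 0) : p ≤ q := by
  refine (h.le_or_le_of_absDirDeriv_nonpos hF hG hp hq ?_).resolve_right fun hqp => ?_
  · rw [absDirDeriv_of_neg hμpq, absDirDeriv_of_pos hμp]
    linarith [absDirDeriv_le_abs (μ q) (-1), absDirDeriv_le_abs (μ (p ⊓ q)) 1, abs_one (α := ℝ),
      abs_neg (1 : ℝ)]
  · rw [sup_eq_left.2 hqp] at hμpq
    linarith

end IsOptimalCycle

theorem exists_pos_of_sum_filter_eq_zero {α : Type*} {G : Finset α} {μ π : α → ℝ} {a : α}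
    (hsum : ∑ g ∈ G with π g = π a, μ g = 0) (ha : a ∈ G) (hμa : μ a < 0) :
    ∃ p ∈ {p | p ∈ G ∧ 0 < μ p}, π p = π a := by
  obtain ⟨p, hp, hμp⟩ :=
    exists_pos_of_sum_zero_of_exists_nonzero μ hsum ⟨a, mem_filter.2 ⟨ha, rfl⟩, hμa.ne⟩
  exact ⟨p, ⟨(mem_filter.1 hp).1, hμp⟩, (mem_filter.1 hp).2⟩

theorem IsChain.sup_eq_or {α : Type*} [Lattice α] {s : Set α} (hs : IsChain (· ≤ ·) s) {a b : α}
    (ha : a ∈ s) (hb : b ∈ s) : a ⊔ b = a ∨ a ⊔ b = b :=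
  (hs.total ha hb).symm.imp sup_eq_left.2 sup_eq_right.2

theorem IsChain.inf_eq_or {α : Type*} [Lattice α] {s : Set α} (hs : IsChain (· ≤ ·) s) {a b : α}
    (ha : a ∈ s) (hb : b ∈ s) : a ⊓ b = a ∨ a ⊓ b = b :=
  (hs.total ha hb).imp inf_eq_left.2 inf_eq_right.2

section Planes

variable {P : Set (ℝ × ℝ × ℝ)} {a : ℝ × ℝ × ℝ}

theorem IsChain.exists_ge_of_planes (hP : IsChain (· ≤ ·) P) (hx : ∃ p ∈ P, p.1 = a.1)
    (hy : ∃ p ∈ P, p.2.1 = a.2.1) (hz : ∃ p ∈ P, p.2.2 = a.2.2) :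
    ∃ p ∈ P, a ≤ p ∧ (p.1 = a.1 ∨ p.2.1 = a.2.1 ∨ p.2.2 = a.2.2) := by
  obtain ⟨px, hpx, hx⟩ := hx
  obtain ⟨py, hpy, hy⟩ := hy
  obtain ⟨pz, hpz, hz⟩ := hz
  have hle : a ≤ px ⊔ py ⊔ pz :=
    ⟨hx ▸ (le_sup_left.trans le_sup_left : px ≤ _).1,
      hy ▸ (le_sup_right.trans le_sup_left : py ≤ _).2.1, hz ▸ (le_sup_right : pz ≤ _).2.2⟩
  rcases hP.sup_eq_or hpx hpy with h | h <;> rw [h] at hle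
  · rcases hP.sup_eq_or hpx hpz with h | h <;> rw [h] at hle
    exacts [⟨px, hpx, hle, Or.inl hx⟩, ⟨pz, hpz, hle, Or.inr (Or.inr hz)⟩]
  · rcases hP.sup_eq_or hpy hpz with h | h <;> rw [h] at hle
    exacts [⟨py, hpy, hle, Or.inr (Or.inl hy)⟩, ⟨pz, hpz, hle, Or.inr (Or.inr hz)⟩]

theorem IsChain.exists_le_of_planes (hP : IsChain (· ≤ ·) P) (hx : ∃ p ∈ P, p.1 = a.1)
    (hy : ∃ p ∈ P, p.2.1 = a.2.1) (hz : ∃ p ∈ P, p.2.2 = a.2.2) :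
    ∃ p ∈ P, p ≤ a ∧ (p.1 = a.1 ∨ p.2.1 = a.2.1 ∨ p.2.2 = a.2.2) := by
  obtain ⟨px, hpx, hx⟩ := hx
  obtain ⟨py, hpy, hy⟩ := hy
  obtain ⟨pz, hpz, hz⟩ := hz
  have hle : px ⊓ py ⊓ pz ≤ a :=
    ⟨hx ▸ (inf_le_left.trans inf_le_left : _ ≤ px).1,
      hy ▸ (inf_le_left.trans inf_le_right : _ ≤ py).2.1, hz ▸ (inf_le_right : _ ≤ pz).2.2⟩
  rcases hP.inf_eq_or hpx hpy with h | h <;> rw [h] at hle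
  · rcases hP.inf_eq_or hpx hpz with h | h <;> rw [h] at hle
    exacts [⟨px, hpx, hle, Or.inl hx⟩, ⟨pz, hpz, hle, Or.inr (Or.inr hz)⟩]
  · rcases hP.inf_eq_or hpy hpz with h | h <;> rw [h] at hle
    exacts [⟨py, hpy, hle, Or.inr (Or.inl hy)⟩, ⟨pz, hpz, hle, Or.inr (Or.inr hz)⟩]

end Planes

theorem isSublattice_grid (Sx Sy Sz : Finset ℝ) :
    IsSublattice (↑(Sx ×ˢ Sy ×ˢ Sz) : Set (ℝ × ℝ × ℝ)) := by
  simpa only [coe_product] using (LinearOrder.isSublattice _).prod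
    ((LinearOrder.isSublattice _).prod (LinearOrder.isSublattice _))

theorem mem_offDiagonalEdges_of {a : ℝ × ℝ × ℝ}
    (ha : a ∈ Icc (0:ℝ) 1 ×ˢ Icc (0:ℝ) 1 ×ˢ Icc (0:ℝ) 1)
    (h0 : a.1 = 0 ∨ a.2.1 = 0 ∨ a.2.2 = 0) (h1 : a.1 = 1 ∨ a.2.1 = 1 ∨ a.2.2 = 1) :
    a ∈ OffDiagonalEdges := by
  obtain ⟨u, v, w⟩ := a
  obtain ⟨hu, hv, hw⟩ := ha
  rcases h0 with h0 | h0 | h0 <;> rcases h1 with h1 | h1 | h1 <;>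
    simp_all [OffDiagonalEdges]

namespace IsOptimalCycle

variable {Sx Sy Sz : Finset ℝ} {F μ : ℝ × ℝ × ℝ → ℝ} {a p : ℝ × ℝ × ℝ}

theorem coord_eq_one_of_le (h : IsOptimalCycle (Sx ×ˢ Sy ×ˢ Sz) F μ)
    (hF : StrictSupermodularOn F ↑(Sx ×ˢ Sy ×ˢ Sz)) (h1 : (1 : ℝ) ∈ Sx ∧ 1 ∈ Sy ∧ 1 ∈ Sz)
    (ha : a ∈ Sx ×ˢ Sy ×ˢ Sz)
    (hcube : a ∈ Icc (0:ℝ) 1 ×ˢ Icc (0:ℝ) 1 ×ˢ Icc (0:ℝ) 1) (hμa : μ a < 0)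
    (hp : p ∈ Sx ×ˢ Sy ×ˢ Sz) (hμp : 0 < μ p) (hap : a ≤ p)
    (hshare : p.1 = a.1 ∨ p.2.1 = a.2.1 ∨ p.2.2 = a.2.2) : a.1 = 1 ∨ a.2.1 = 1 ∨ a.2.2 = 1 := by
  simp only [mem_product] at ha
  have hle (q) (hq : q ∈ Sx ×ˢ Sy ×ˢ Sz) (hpq : p ⊓ q = a) : q ≤ p :=
    h.le_of_inf_neg hF (isSublattice_grid Sx Sy Sz) hp hq hμp (hpq ▸ hμa)
  rcases hshare with hk | hk | hk
  · have := hle (1, a.2.1, a.2.2) (by simp [mem_product, h1.1, ha.2])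
      (Prod.ext (by simp [hk, hcube.1.2]) (inf_eq_right.2 hap.2))
    exact Or.inl (le_antisymm hcube.1.2 (hk ▸ this.1))
  · have := hle (a.1, 1, a.2.2) (by simp [mem_product, h1.2.1, ha.1, ha.2.2])
      (Prod.ext (inf_eq_right.2 hap.1)
        (Prod.ext (by simp [hk, hcube.2.1.2]) (inf_eq_right.2 hap.2.2)))
    exact Or.inr (Or.inl (le_antisymm hcube.2.1.2 (hk ▸ this.2.1)))
  · have := hle (a.1, a.2.1, 1) (by simp [mem_product, h1.2.2, ha.1, ha.2.1])
      (Prod.ext (inf_eq_right.2 hap.1)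
        (Prod.ext (inf_eq_right.2 hap.2.1) (by simp [hk, hcube.2.2.2])))
    exact Or.inr (Or.inr (le_antisymm hcube.2.2.2 (hk ▸ this.2.2)))

theorem coord_eq_zero_of_ge (h : IsOptimalCycle (Sx ×ˢ Sy ×ˢ Sz) F μ)
    (hF : StrictSupermodularOn F ↑(Sx ×ˢ Sy ×ˢ Sz)) (h0 : (0 : ℝ) ∈ Sx ∧ 0 ∈ Sy ∧ 0 ∈ Sz)
    (ha : a ∈ Sx ×ˢ Sy ×ˢ Sz)
    (hcube : a ∈ Icc (0:ℝ) 1 ×ˢ Icc (0:ℝ) 1 ×ˢ Icc (0:ℝ) 1) (hμa : μ a < 0)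
    (hp : p ∈ Sx ×ˢ Sy ×ˢ Sz) (hμp : 0 < μ p) (hpa : p ≤ a)
    (hshare : p.1 = a.1 ∨ p.2.1 = a.2.1 ∨ p.2.2 = a.2.2) : a.1 = 0 ∨ a.2.1 = 0 ∨ a.2.2 = 0 := by
  simp only [mem_product] at ha
  have hge (q) (hq : q ∈ Sx ×ˢ Sy ×ˢ Sz) (hpq : p ⊔ q = a) : p ≤ q :=
    h.le_of_sup_neg hF (isSublattice_grid Sx Sy Sz) hp hq hμp (hpq ▸ hμa)
  rcases hshare with hk | hk | hk
  · have := hge (0, a.2.1, a.2.2) (by simp [mem_product, h0.1, ha.2])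
      (Prod.ext (by simp [hk, hcube.1.1]) (sup_eq_right.2 hpa.2))
    exact Or.inl (le_antisymm (hk ▸ this.1) hcube.1.1)
  · have := hge (a.1, 0, a.2.2) (by simp [mem_product, h0.2.1, ha.1, ha.2.2])
      (Prod.ext (sup_eq_right.2 hpa.1)
        (Prod.ext (by simp [hk, hcube.2.1.1]) (sup_eq_right.2 hpa.2.2)))
    exact Or.inr (Or.inl (le_antisymm (hk ▸ this.2.1) hcube.2.1.1))
  · have := hge (a.1, a.2.1, 0) (by simp [mem_product, h0.2.2, ha.1, ha.2.1])
      (Prod.ext (sup_eq_right.2 hpa.1)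
        (Prod.ext (sup_eq_right.2 hpa.2.1) (by simp [hk, hcube.2.2.1])))
    exact Or.inr (Or.inr (le_antisymm (hk ▸ this.2.2) hcube.2.2.1))

end IsOptimalCycle

theorem stmt_6_general (f : ℝ → ℝ → ℝ → ℝ)
    (hf : StrictMixed f)
    (Sx Sy Sz : Finset ℝ)
    (hSx : (Sx : Set ℝ) ⊆ Icc (0:ℝ) 1) (hSy : (Sy : Set ℝ) ⊆ Icc (0:ℝ) 1)
    (hSz : (Sz : Set ℝ) ⊆ Icc (0:ℝ) 1)
    (h01 : ({0, 1} : Finset ℝ) ⊆ Sx ∩ Sy ∩ Sz)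
    (m : ℕ) (x : Fin m → ℝ × ℝ × ℝ) (lam : Fin m → ℝ)
    (hopt : OptimalPCV Sx Sy Sz f m x lam) :
    ∀ i : Fin m, lam i < 0 → x i ∈ OffDiagonalEdges := by
  intro i hi
  have hμ := hopt.isOptimalCycle i
  have hcube (g) (hg : g ∈ Sx ×ˢ Sy ×ˢ Sz) : g ∈ Icc (0:ℝ) 1 ×ˢ Icc (0:ℝ) 1 ×ˢ Icc (0:ℝ) 1 := by
    simp only [mem_product] at hg
    exact ⟨hSx hg.1, hSy hg.2.1, hSz hg.2.2⟩
  have hF := hf.strictSupermodularOn.mono hcube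
  have hdiag (t) (ht : t ∈ ({0, 1} : Finset ℝ)) : t ∈ Sx ∧ t ∈ Sy ∧ t ∈ Sz := by
    simpa [and_assoc] using h01 ht
  have ha : x i ∈ Sx ×ˢ Sy ×ˢ Sz := by simpa [mem_product] using hopt.2.1 i
  have hμa : Function.extend x lam 0 (x i) < 0 := by rwa [hopt.1.1.extend_apply]
  have hP := hμ.isChain_pos hF (isSublattice_grid Sx Sy Sz)
  have hx := exists_pos_of_sum_filter_eq_zero (hμ.mem.1 (x i).1) ha hμa
  have hy := exists_pos_of_sum_filter_eq_zero (hμ.mem.2.1 (x i).2.1) ha hμa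
  have hz := exists_pos_of_sum_filter_eq_zero (hμ.mem.2.2 (x i).2.2) ha hμa
  obtain ⟨p, ⟨hp, hμp⟩, hap, hp_plane⟩ := hP.exists_ge_of_planes hx hy hz
  obtain ⟨q, ⟨hq, hμq⟩, hqa, hq_plane⟩ := hP.exists_le_of_planes hx hy hz
  exact mem_offDiagonalEdges_of (hcube _ ha)
    (hμ.coord_eq_zero_of_ge hF (hdiag 0 (by simp)) ha (hcube _ ha) hμa hq hμq hqa hq_plane)
    (hμ.coord_eq_one_of_le hF (hdiag 1 (by simp)) ha (hcube _ ha) hμa hp hμp hap hp_plane)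

theorem stmt_6 (f : ℝ → ℝ → ℝ → ℝ)
    (hcont : ContinuousOn (fun p : ℝ × ℝ × ℝ => f p.1 p.2.1 p.2.2)
      (Icc (0:ℝ) 1 ×ˢ Icc (0:ℝ) 1 ×ˢ Icc (0:ℝ) 1))
    (hf : StrictMixed f)
    (Sx Sy Sz : Finset ℝ)
    (hSx : (Sx : Set ℝ) ⊆ Icc (0:ℝ) 1) (hSy : (Sy : Set ℝ) ⊆ Icc (0:ℝ) 1)
    (hSz : (Sz : Set ℝ) ⊆ Icc (0:ℝ) 1)
    (h01 : ({0, 1} : Finset ℝ) ⊆ Sx ∩ Sy ∩ Sz)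
    (m : ℕ) (x : Fin m → ℝ × ℝ × ℝ) (lam : Fin m → ℝ)
    (hopt : OptimalPCV Sx Sy Sz f m x lam) :
    ∀ i : Fin m, lam i < 0 → x i ∈ OffDiagonalEdges :=
  stmt_6_general f hf Sx Sy Sz hSx hSy hSz h01 m x lam hopt
end

section
/- For the bilinear function f(x,y,z) = xz on [0,1]³, the best approximation error E(f,[0,1]³) = inf ‖f(x,y,z) - φ(x) - ψ(y) - ω(z)‖_∞ over continuous φ, ψ, ω : [0,1] → ℝ equals 1/4. -/
open Set

theorem stmt_16 :
    sInf {e : ℝ | ∃ φ ψ ω : Icc (0:ℝ) 1 → ℝ,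
      Continuous φ ∧ Continuous ψ ∧ Continuous ω ∧
      e = ⨆ p : Icc (0:ℝ) 1 × Icc (0:ℝ) 1 × Icc (0:ℝ) 1,
        |(p.1 : ℝ) * (p.2.2 : ℝ) - φ p.1 - ψ p.2.1 - ω p.2.2|} = 1 / 4 := by
  have h0 : (0:ℝ) ∈ Icc (0:ℝ) 1 := by constructor <;> norm_num
  have h1 : (1:ℝ) ∈ Icc (0:ℝ) 1 := by constructor <;> norm_num
  -- lower bound for every member
  have hlow : ∀ e ∈ {e : ℝ | ∃ φ ψ ω : Icc (0:ℝ) 1 → ℝ,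
      Continuous φ ∧ Continuous ψ ∧ Continuous ω ∧
      e = ⨆ p : Icc (0:ℝ) 1 × Icc (0:ℝ) 1 × Icc (0:ℝ) 1,
        |(p.1 : ℝ) * (p.2.2 : ℝ) - φ p.1 - ψ p.2.1 - ω p.2.2|}, 1/4 ≤ e := by
    rintro e ⟨φ, ψ, ω, hφ, hψ, hω, rfl⟩
    set g : Icc (0:ℝ) 1 × Icc (0:ℝ) 1 × Icc (0:ℝ) 1 → ℝ :=
      fun p => |(p.1 : ℝ) * (p.2.2 : ℝ) - φ p.1 - ψ p.2.1 - ω p.2.2| with hg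
    have hcont : Continuous g := by
      fun_prop
    have hbdd : BddAbove (Set.range g) := (isCompact_range hcont).bddAbove
    have hle : ∀ p, g p ≤ ⨆ q, g q := fun p => le_ciSup hbdd p
    set z : Icc (0:ℝ) 1 := ⟨0, h0⟩
    set o : Icc (0:ℝ) 1 := ⟨1, h1⟩
    have h1' := hle (z, z, z)
    have h2 := hle (o, o, o)
    have h3 := hle (z, z, o)
    have h4 := hle (o, o, z)
    have key : (1:ℝ) ≤ g (z,z,z) + g (o,o,o) + g (z,z,o) + g (o,o,z) := by
      have e1 : ((z:ℝ) * (z:ℝ) - φ z - ψ z - ω z) + ((o:ℝ) * (o:ℝ) - φ o - ψ o - ω o)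
          - ((z:ℝ) * (o:ℝ) - φ z - ψ z - ω o) - ((o:ℝ) * (z:ℝ) - φ o - ψ o - ω z) = 1 := by
        simp only [z, o]
        ring
      calc (1:ℝ) = ((z:ℝ) * (z:ℝ) - φ z - ψ z - ω z) + ((o:ℝ) * (o:ℝ) - φ o - ψ o - ω o)
          - ((z:ℝ) * (o:ℝ) - φ z - ψ z - ω o) - ((o:ℝ) * (z:ℝ) - φ o - ψ o - ω z) := e1.symm
        _ ≤ g (z,z,z) + g (o,o,o) + g (z,z,o) + g (o,o,z) := by
            simp only [hg]
            have := le_abs_self ((z:ℝ) * (z:ℝ) - φ z - ψ z - ω z)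
            have := le_abs_self ((o:ℝ) * (o:ℝ) - φ o - ψ o - ω o)
            have := neg_abs_le ((z:ℝ) * (o:ℝ) - φ z - ψ z - ω o)
            have := neg_abs_le ((o:ℝ) * (z:ℝ) - φ o - ψ o - ω z)
            linarith
    linarith
  apply le_antisymm
  · -- sInf ≤ 1/4 : membership witness
    apply csInf_le
    · exact ⟨1/4, fun e he => hlow e he⟩
    · refine ⟨fun x => (x:ℝ)/2 - 1/8, fun _ => 0, fun z => (z:ℝ)/2 - 1/8, ?_, ?_, ?_, ?_⟩
      · fun_prop
      · fun_prop
      · fun_prop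
      · set g : Icc (0:ℝ) 1 × Icc (0:ℝ) 1 × Icc (0:ℝ) 1 → ℝ :=
          fun p => |(p.1 : ℝ) * (p.2.2 : ℝ) - ((p.1:ℝ)/2 - 1/8) - 0 - ((p.2.2:ℝ)/2 - 1/8)| with hg
        have hub : ∀ p, g p ≤ 1/4 := by
          rintro ⟨x, y, w⟩
          have hx := x.2
          have hw := w.2
          simp only [hg]
          have : (x:ℝ) * (w:ℝ) - ((x:ℝ)/2 - 1/8) - 0 - ((w:ℝ)/2 - 1/8)
              = ((x:ℝ) - 1/2) * ((w:ℝ) - 1/2) := by ring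
          rw [this, abs_mul]
          have hx' : |(x:ℝ) - 1/2| ≤ 1/2 := by
            rw [abs_le]; constructor <;> [linarith [hx.1]; linarith [hx.2]]
          have hw' : |(w:ℝ) - 1/2| ≤ 1/2 := by
            rw [abs_le]; constructor <;> [linarith [hw.1]; linarith [hw.2]]
          calc |(x:ℝ) - 1/2| * |(w:ℝ) - 1/2| ≤ (1/2) * (1/2) :=
                mul_le_mul hx' hw' (abs_nonneg _) (by norm_num)
            _ = 1/4 := by norm_num
        have hbdd : BddAbove (Set.range g) := ⟨1/4, by rintro _ ⟨p, rfl⟩; exact hub p⟩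
        apply le_antisymm
        · have : g (⟨0,h0⟩, ⟨0,h0⟩, ⟨0,h0⟩) = 1/4 := by
            simp only [hg]; norm_num
          calc (1:ℝ)/4 = g (⟨0,h0⟩, ⟨0,h0⟩, ⟨0,h0⟩) := this.symm
            _ ≤ ⨆ p, g p := le_ciSup hbdd _
        · exact ciSup_le hub
  · exact le_csInf ⟨_, ⟨fun x => (x:ℝ)/2, fun _ => 0, fun z => (z:ℝ)/2, by fun_prop, by fun_prop,
      by fun_prop, rfl⟩⟩ hlow
end
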